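/- arXiv:2204.08950 — 3 statements merged into one kernel-verified Lean document; each statement's English description precedes it below -/
import Mathlib

section
/- Let d ≥ 2 and r ∈ [1,∞). There is a constant C depending only on d such that for all smooth functions a, f : 𝕋^d → ℝ and every σ ∈ ℕ with σ ≥ 1, | ‖a · f(σ·)‖_{L^r(𝕋^d)} − ‖a‖_{L^r(𝕋^d)} ‖f‖_{L^r(𝕋^d)} | ≤ C σ^{−1/r} ‖a‖_{C^1(𝕋^d)} ‖f‖_{L^r(𝕋^d)}, where f(σ·) denotes the function x ↦ f(σx) on 𝕋^d. -/
open MeasureTheory Filter Topology Set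
open scoped ENNReal NNReal BigOperators

noncomputable section

/-- The unit cube `[0,1)^d ⊆ ℝ^d`, a fundamental domain of the torus `𝕋^d = ℝ^d/ℤ^d`
(Lebesgue measure on it is a probability measure, matching the normalization on `𝕋^d`). -/
def cube (d : ℕ) : Set (Fin d → ℝ) := Set.univ.pi fun _ => Set.Ico (0:ℝ) 1

/-- `f : ℝ^d → E` is `ℤ^d`-periodic, i.e. it descends to the torus `𝕋^d = ℝ^d/ℤ^d`. -/
def ZPer {d : ℕ} {E : Type*} (f : (Fin d → ℝ) → E) : Prop :=
  ∀ (x : Fin d → ℝ) (k : Fin d → ℤ), f (x + fun i => (k i : ℝ)) = f x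

/-- The (real-valued) `L^p` norm on the torus, for finite `p`. -/
def lpNorm {d : ℕ} {E : Type*} [NormedAddCommGroup E] (p : ℝ) (f : (Fin d → ℝ) → E) : ℝ :=
  (∫ x in cube d, ‖f x‖ ^ p) ^ (1/p)

/-- The `C^k` norm of a function on the torus. -/
def ckNorm {d : ℕ} {E : Type*} [NormedAddCommGroup E] [NormedSpace ℝ E] (k : ℕ)
    (f : (Fin d → ℝ) → E) : ℝ :=
  ∑ i ∈ Finset.range (k+1), ⨆ x : Fin d → ℝ, ‖iteratedFDeriv ℝ i f x‖

/-- The (real-valued) `W^{1,p}` norm on the torus. -/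
def w1pNorm {d : ℕ} (p : ℝ) (u : (Fin d → ℝ) → (Fin d → ℝ)) : ℝ :=
  lpNorm p u + lpNorm p (fun x => fderiv ℝ u x)

/-- The `W^{s,p}` norm on the torus, `ℝ≥0∞`-valued so that `p = ∞` is allowed. -/
def eWspNorm {d : ℕ} {E : Type*} [NormedAddCommGroup E] [NormedSpace ℝ E] (s : ℕ) (p : ℝ≥0∞)
    (f : (Fin d → ℝ) → E) : ℝ≥0∞ :=
  ∑ i ∈ Finset.range (s+1),
    eLpNorm (fun x => iteratedFDeriv ℝ i f x) p (volume.restrict (cube d))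

/-- Spatial divergence of a vector field on `ℝ^d`. -/
def divF {d : ℕ} (f : (Fin d → ℝ) → (Fin d → ℝ)) (x : Fin d → ℝ) : ℝ :=
  ∑ i, fderiv ℝ (fun y => f y i) x (Pi.single i 1)

/-- Temporal support of a space-time function on the torus: the closure of the set of
times at which the function is not almost everywhere zero in space. -/
def tSupp {E : Type*} [Zero E] (d : ℕ) (f : ℝ → (Fin d → ℝ) → E) : Set ℝ :=
  closure {t | ¬ ∀ᵐ x ∂(volume.restrict (cube d)), f t x = 0}

/-- A space-time function that is jointly smooth and `ℤ^d`-periodic in space. -/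
def SmoothPer (d : ℕ) {E : Type*} [NormedAddCommGroup E] [NormedSpace ℝ E]
    (f : ℝ → (Fin d → ℝ) → E) : Prop :=
  ContDiff ℝ (⊤ : ℕ∞) (fun q : ℝ × (Fin d → ℝ) => f q.1 q.2) ∧ ∀ t, ZPer (f t)

/-- `u ∈ L^1(0,T; W^{1,p}(𝕋^d))`: there are smooth (spatially periodic) fields `v n`
converging to `u` in `L^1_t L^p_x` and Cauchy in the `L^1_t W^{1,p}_x` norm. -/
def MemL1tW1p (d : ℕ) (T p : ℝ) (u : ℝ → (Fin d → ℝ) → (Fin d → ℝ)) : Prop :=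
  ∃ v : ℕ → ℝ → (Fin d → ℝ) → (Fin d → ℝ),
    (∀ n, SmoothPer d (v n)) ∧
    Tendsto (fun n => ∫ t in Set.Ioo 0 T, lpNorm p (fun x => v n t x - u t x)) atTop (nhds 0) ∧
    ∀ ε : ℝ, 0 < ε → ∃ N : ℕ, ∀ m ≥ N, ∀ n ≥ N,
      (∫ t in Set.Ioo 0 T, w1pNorm p (fun x => v m t x - v n t x)) < ε

/-- `ρ ∈ L^p(0,T; C^k(𝕋^d))`: for a.e. `t`, `ρ(t,·)` is `C^k`, and `t ↦ ‖ρ(t,·)‖_{C^k}`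
is in `L^p(0,T)`. -/
def MemLptCk (d : ℕ) (T p : ℝ) (k : ℕ) (ρ : ℝ → (Fin d → ℝ) → ℝ) : Prop :=
  (∀ᵐ t ∂(volume.restrict (Set.Ioo 0 T)), ContDiff ℝ (k : ℕ∞) (ρ t)) ∧
  IntegrableOn (fun t => (ckNorm k (ρ t)) ^ p) (Set.Ioo 0 T)

/-- `u(t,·)` is weakly divergence-free for a.e. `t ∈ (0,T)`. -/
def WeakDivFree (d : ℕ) (T : ℝ) (u : ℝ → (Fin d → ℝ) → Fin d → ℝ) : Prop :=
  ∀ ψ : (Fin d → ℝ) → ℝ, ContDiff ℝ (⊤ : ℕ∞) ψ → ZPer ψ →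
    ∀ᵐ t ∂(volume.restrict (Set.Ioo 0 T)),
      (∫ x in cube d, ∑ i, u t x i * fderiv ℝ ψ x (Pi.single i 1)) = 0

/-- Test functions `φ ∈ C_c^∞([0,T) × 𝕋^d)`: jointly smooth, `ℤ^d`-periodic in space,
and vanishing for `t` near `T`. -/
def IsTestFn (d : ℕ) (T : ℝ) (φ : ℝ → (Fin d → ℝ) → ℝ) : Prop :=
  ContDiff ℝ (⊤ : ℕ∞) (fun q : ℝ × (Fin d → ℝ) => φ q.1 q.2) ∧ (∀ t, ZPer (φ t)) ∧
  ∃ T', T' < T ∧ ∀ t ≥ T', ∀ x, φ t x = 0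

/-- `ρ` is a weak solution of the transport equation `∂_t ρ + u·∇ρ = 0` on `[0,T] × 𝕋^d`
with initial datum `ρ₀`. -/
def IsWeakSol (d : ℕ) (T : ℝ) (u : ℝ → (Fin d → ℝ) → Fin d → ℝ)
    (ρ : ℝ → (Fin d → ℝ) → ℝ) (ρ₀ : (Fin d → ℝ) → ℝ) : Prop :=
  ∀ φ : ℝ → (Fin d → ℝ) → ℝ, IsTestFn d T φ →
    (∫ x in cube d, ρ₀ x * φ 0 x) +
      (∫ t in Set.Ioo 0 T, ∫ x in cube d,
        ρ t x * (deriv (fun s => φ s x) t +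
          ∑ i, u t x i * fderiv ℝ (φ t) x (Pi.single i 1))) = 0

/-- The rescaled Mikado density `𝚽_k(x) = Φ_k(σx)`, built from the profile `φ` on
`ℝ^{d-1}` (here `d = n+1` and the `k`-th coordinate is removed via `Fin.succAbove`). -/
def MikPhi {n : ℕ} (φ : (Fin n → ℝ) → ℝ) (μ : ℝ) (σ : ℕ) (k : Fin (n+1))
    (x : Fin (n+1) → ℝ) : ℝ :=
  ∑' m : Fin n → ℤ, φ (fun j => μ * ((σ : ℝ) * x (k.succAbove j) - (m j : ℝ)))

/-- The rescaled Mikado potential `𝛀_k(x) = Ω_k(σx)`. -/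
def MikOmega {n : ℕ} (Ω : (Fin n → ℝ) → (Fin n → ℝ)) (μ : ℝ) (σ : ℕ) (k : Fin (n+1))
    (x : Fin (n+1) → ℝ) : Fin n → ℝ :=
  μ⁻¹ • ∑' m : Fin n → ℤ, Ω (fun j => μ * ((σ : ℝ) * x (k.succAbove j) - (m j : ℝ)))

/-- The rescaled Mikado flow `𝐖_k(x) = W_k(σx) = μ^{d-1} 𝚽_k(x) e_k`. -/
def MikW {n : ℕ} (φ : (Fin n → ℝ) → ℝ) (μ : ℝ) (σ : ℕ) (k : Fin (n+1))
    (x : Fin (n+1) → ℝ) : Fin (n+1) → ℝ :=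
  (μ ^ n * MikPhi φ μ σ k x) • (Pi.single k 1 : Fin (n+1) → ℝ)

/-- `G_κ(t) = ∑_{m ∈ ℤ} G(κ(t-m))`, the 1-periodization of the concentrated profile. -/
def perK (G : ℝ → ℝ) (κ : ℝ) (t : ℝ) : ℝ := ∑' m : ℤ, G (κ * (t - (m : ℝ)))

/-- `G_{κ,k}(t) = ∑_{m ∈ ℤ} G(κ(t - t_k - m))` with shift `t_k = k/d`. -/
def perKShift (G : ℝ → ℝ) (κ : ℝ) (d : ℕ) (k : Fin d) (t : ℝ) : ℝ :=
  ∑' m : ℤ, G (κ * (t - (k.val : ℝ) / (d : ℝ) - (m : ℝ)))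

/-- `g̃(t) = κ^α G_κ(σ t)`. -/
def gTilde (G : ℝ → ℝ) (κ α : ℝ) (σ : ℕ) (t : ℝ) : ℝ := κ ^ α * perK G κ ((σ : ℝ) * t)

/-- `g(t) = κ^{1-α} G_κ(σ t)`. -/
def gBig (G : ℝ → ℝ) (κ α : ℝ) (σ : ℕ) (t : ℝ) : ℝ := κ ^ (1 - α) * perK G κ ((σ : ℝ) * t)

/-- `g̃_k(t) = κ^α G_{κ,k}(σ t)`. -/
def gTildeK (G : ℝ → ℝ) (κ α : ℝ) (σ : ℕ) {d : ℕ} (k : Fin d) (t : ℝ) : ℝ :=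
  κ ^ α * perKShift G κ d k ((σ : ℝ) * t)

/-- `g_k(t) = κ^{1-α} G_{κ,k}(σ t)`. -/
def gBigK (G : ℝ → ℝ) (κ α : ℝ) (σ : ℕ) {d : ℕ} (k : Fin d) (t : ℝ) : ℝ :=
  κ ^ (1 - α) * perKShift G κ d k ((σ : ℝ) * t)

/-- Partial derivative in the `i`-th coordinate direction. -/
def pderivI {d : ℕ} (i : Fin d) (f : (Fin d → ℝ) → ℝ) : (Fin d → ℝ) → ℝ :=
  fun x => fderiv ℝ f x (Pi.single i 1)

/-- Iterated partial derivative `∂^β` for a multi-index `β`. -/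
def pMulti {d : ℕ} (β : Fin d → ℕ) (f : (Fin d → ℝ) → ℝ) : (Fin d → ℝ) → ℝ :=
  ((List.ofFn fun i : Fin d => (pderivI i)^[β i]).foldr (· ∘ ·) id) f

/-- The `C^1` norm on `[0,1] × 𝕋^d` of a space-time vector field:
sup of the field together with its first derivatives in `t` and `x`. -/
def c1st {d : ℕ} (R : ℝ → (Fin d → ℝ) → (Fin d → ℝ)) : ℝ :=
  (⨆ q : (Set.Icc (0:ℝ) 1 ×ˢ cube d), ‖R q.1.1 q.1.2‖) +
  (⨆ q : (Set.Icc (0:ℝ) 1 ×ˢ cube d), ‖fderiv ℝ (fun z : ℝ × (Fin d → ℝ) => R z.1 z.2) q.1‖)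

end

section Helpers
open Pointwise
namespace IH
variable {d : ℕ}

lemma cube_meas : MeasurableSet (cube d) :=
  MeasurableSet.univ_pi fun _ => measurableSet_Ico

lemma cube_subset_Icc : cube d ⊆ Icc (0 : Fin d → ℝ) 1 := by
  intro x hx
  constructor <;> intro i <;> have := hx i (mem_univ i)
  · exact this.1
  · exact this.2.le

lemma volume_cube : volume (cube d) = 1 := by
  rw [cube, volume_pi_pi]
  simp

lemma integrableOn_cube {G : (Fin d → ℝ) → ℝ} (hG : Continuous G) :
    IntegrableOn G (cube d) :=
  (hG.continuousOn.integrableOn_compact isCompact_Icc).mono_set cube_subset_Icc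

lemma setIntegral_const_cube (c : ℝ) : ∫ _ in cube d, c = c := by
  rw [setIntegral_const, measureReal_def, volume_cube]
  simp

/-- the subcube with integer corner k -/
def sk (σ : ℕ) (k : Fin d → Fin σ) : Set (Fin d → ℝ) :=
  Set.univ.pi fun i => Ico ((k i : ℕ) : ℝ) (((k i : ℕ) : ℝ) + 1)

lemma sk_meas {σ : ℕ} (k : Fin d → Fin σ) : MeasurableSet (sk σ k) :=
  MeasurableSet.univ_pi fun _ => measurableSet_Ico

lemma smul_cube {σ : ℕ} (hσ : 0 < σ) :
    (σ:ℝ) • cube d = Set.univ.pi fun _ : Fin d => Ico (0:ℝ) (σ:ℝ) := by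
  have hσR : (0:ℝ) < σ := by exact_mod_cast hσ
  ext x
  rw [mem_smul_set_iff_inv_smul_mem₀ (ne_of_gt hσR)]
  constructor
  · intro hx
    intro i _
    obtain ⟨h1, h2⟩ := hx i (mem_univ i)
    simp only [Pi.smul_apply, smul_eq_mul] at h1 h2
    constructor
    · have hx' : x i = (σ:ℝ) * ((σ:ℝ)⁻¹ * x i) := by field_simp
      rw [hx']
      exact mul_nonneg hσR.le h1
    · have := (inv_mul_lt_iff₀ hσR).mp h2
      linarith
  · intro hx i _
    obtain ⟨h1, h2⟩ := hx i (mem_univ i)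
    simp only [Pi.smul_apply, smul_eq_mul]
    constructor
    · exact mul_nonneg (inv_nonneg.2 hσR.le) h1
    · rw [inv_mul_lt_iff₀ hσR, mul_one]
      exact h2

lemma union_sk {σ : ℕ} (hσ : 0 < σ) :
    (⋃ k : Fin d → Fin σ, sk σ k) = Set.univ.pi fun _ : Fin d => Ico (0:ℝ) (σ:ℝ) := by
  ext x
  simp only [mem_iUnion]
  constructor
  · rintro ⟨k, hk⟩ i _
    have := hk i (mem_univ i)
    have h1 : ((k i : ℕ) : ℝ) + 1 ≤ σ := by
      have : (k i : ℕ) + 1 ≤ σ := (k i).2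
      exact_mod_cast this
    constructor
    · have h0 : (0:ℝ) ≤ ((k i : ℕ) : ℝ) := by positivity
      linarith [this.1]
    · linarith [this.2]
  · intro hx
    refine ⟨fun i => ⟨⌊x i⌋₊, ?_⟩, fun i _ => ?_⟩
    · have := hx i (mem_univ i)
      exact (Nat.floor_lt this.1).mpr this.2
    · have := hx i (mem_univ i)
      constructor
      · exact Nat.floor_le this.1
      · exact_mod_cast Nat.lt_floor_add_one (x i)

lemma disj_sk {σ : ℕ} : Pairwise (Function.onFun Disjoint (sk (d := d) σ)) := by
  intro k k' hkk'
  rw [Function.onFun, Set.disjoint_left]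
  intro x hx hx'
  apply hkk'
  funext i
  have h1 := hx i (mem_univ i)
  have h2 := hx' i (mem_univ i)
  have : (k i : ℕ) = (k' i : ℕ) := by
    have a1 : ((k i : ℕ) : ℝ) < ((k' i : ℕ) : ℝ) + 1 := lt_of_le_of_lt h1.1 h2.2
    have a2 : ((k' i : ℕ) : ℝ) < ((k i : ℕ) : ℝ) + 1 := lt_of_le_of_lt h2.1 h1.2
    have b1 : (k i : ℕ) < (k' i : ℕ) + 1 := by exact_mod_cast a1
    have b2 : (k' i : ℕ) < (k i : ℕ) + 1 := by exact_mod_cast a2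
    omega
  exact Fin.ext this

lemma integral_sk {σ : ℕ} (k : Fin d → Fin σ) (G : (Fin d → ℝ) → ℝ) :
    ∫ x in sk σ k, G x = ∫ y in cube d, G (y + fun i => ((k i : ℕ) : ℝ)) := by
  have hmem : ∀ x : Fin d → ℝ, (x + fun i => ((k i : ℕ) : ℝ)) ∈ sk σ k ↔ x ∈ cube d := by
    intro x
    constructor
    · intro hx i _
      have := hx i (mem_univ i)
      simp only [Pi.add_apply] at this
      constructor
      · linarith [this.1]
      · linarith [this.2]
    · intro hx i _
      have := hx i (mem_univ i)
      simp only [Pi.add_apply]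
      constructor
      · linarith [this.1]
      · linarith [this.2]
  have key : ∀ x : Fin d → ℝ,
      (sk σ k).indicator G (x + fun i => ((k i : ℕ) : ℝ)) =
      (cube d).indicator (fun y => G (y + fun i => ((k i : ℕ) : ℝ))) x := by
    intro x
    by_cases hx : x ∈ cube d
    · rw [Set.indicator_of_mem hx, Set.indicator_of_mem ((hmem x).mpr hx)]
    · rw [Set.indicator_of_notMem hx, Set.indicator_of_notMem (fun h => hx ((hmem x).mp h))]
  rw [← integral_indicator (sk_meas k), ← integral_indicator cube_meas]
  rw [← integral_add_right_eq_self ((sk σ k).indicator G) (fun i => ((k i : ℕ) : ℝ))]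
  exact integral_congr_ae (Filter.Eventually.of_forall key)

lemma split (σ : ℕ) (hσ : 0 < σ) (G : (Fin d → ℝ) → ℝ) (hG : Continuous G) :
    ∫ x in cube d, G ((σ:ℝ) • x) =
      ((σ:ℝ) ^ d)⁻¹ * ∑ k : Fin d → Fin σ, ∫ y in cube d, G (y + fun i => ((k i : ℕ) : ℝ)) := by
  have hσR : (0:ℝ) < σ := by exact_mod_cast hσ
  have h1 := Measure.setIntegral_comp_smul_of_pos (volume : Measure (Fin d → ℝ)) G (cube d) hσR
  rw [h1]
  have hrank : Module.finrank ℝ (Fin d → ℝ) = d := by simp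
  rw [hrank, smul_cube hσ, ← union_sk hσ]
  have hInt : IntegrableOn G (⋃ k : Fin d → Fin σ, sk σ k) := by
    rw [union_sk hσ]
    refine ((hG.continuousOn.integrableOn_compact (isCompact_Icc
      (a := (0 : Fin d → ℝ)) (b := fun _ => (σ:ℝ)))).mono_set ?_)
    intro x hx
    constructor <;> intro i <;> have := hx i (mem_univ i)
    · exact this.1
    · exact this.2.le
  rw [integral_iUnion (fun k => sk_meas k) disj_sk hInt, tsum_fintype]
  rw [smul_eq_mul]
  congr 1
  exact Finset.sum_congr rfl fun k _ => integral_sk k G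

/-- The averaged function. -/
noncomputable def Sav (σ : ℕ) (g : (Fin d → ℝ) → ℝ) (y : Fin d → ℝ) : ℝ :=
  ((σ:ℝ) ^ d)⁻¹ * ∑ k : Fin d → Fin σ, g ((σ:ℝ)⁻¹ • (y + fun i => ((k i : ℕ) : ℝ)))

lemma Sav_continuous {σ : ℕ} {g : (Fin d → ℝ) → ℝ} (hg : Continuous g) :
    Continuous (Sav σ g) := by
  apply Continuous.mul continuous_const
  apply continuous_finset_sum
  intro k _
  fun_prop

lemma conv_eq (σ : ℕ) (hσ : 0 < σ) (g h : (Fin d → ℝ) → ℝ)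
    (hg : Continuous g) (hh : Continuous h) (hper : ZPer h) :
    ∫ x in cube d, g x * h ((σ:ℝ) • x) = ∫ y in cube d, Sav σ g y * h y := by
  have hσR : (0:ℝ) < σ := by exact_mod_cast hσ
  have hG : Continuous fun z : Fin d → ℝ => g ((σ:ℝ)⁻¹ • z) * h z :=
    (hg.comp (continuous_const_smul _)).mul hh
  have e1 : ∀ x : Fin d → ℝ, g x * h ((σ:ℝ) • x)
      = (fun z => g ((σ:ℝ)⁻¹ • z) * h z) ((σ:ℝ) • x) := by
    intro x
    simp only
    rw [smul_smul, inv_mul_cancel₀ (ne_of_gt hσR), one_smul]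
  calc ∫ x in cube d, g x * h ((σ:ℝ) • x)
      = ∫ x in cube d, (fun z => g ((σ:ℝ)⁻¹ • z) * h z) ((σ:ℝ) • x) := by
        exact setIntegral_congr_fun cube_meas fun x _ => e1 x
  _ = ((σ:ℝ) ^ d)⁻¹ * ∑ k : Fin d → Fin σ,
        ∫ y in cube d, g ((σ:ℝ)⁻¹ • (y + fun i => ((k i : ℕ) : ℝ)))
          * h (y + fun i => ((k i : ℕ) : ℝ)) := split σ hσ _ hG
  _ = ((σ:ℝ) ^ d)⁻¹ * ∑ k : Fin d → Fin σ,
        ∫ y in cube d, g ((σ:ℝ)⁻¹ • (y + fun i => ((k i : ℕ) : ℝ))) * h y := by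
        congr 1
        refine Finset.sum_congr rfl fun k _ => ?_
        refine setIntegral_congr_fun cube_meas fun y _ => ?_
        congr 1
        have := hper y (fun i => ((k i : ℕ) : ℤ))
        push_cast at this
        exact this
  _ = ((σ:ℝ) ^ d)⁻¹ * ∫ y in cube d, ∑ k : Fin d → Fin σ,
        g ((σ:ℝ)⁻¹ • (y + fun i => ((k i : ℕ) : ℝ))) * h y := by
        congr 1
        refine (integral_finset_sum Finset.univ fun k _ => ?_).symm
        exact integrableOn_cube
          (by fun_prop)
  _ = ∫ y in cube d, Sav σ g y * h y := by
        rw [← MeasureTheory.integral_const_mul]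
        refine setIntegral_congr_fun cube_meas fun y _ => ?_
        rw [Sav, mul_assoc, Finset.sum_mul]


variable {d : ℕ}



/-- Every point reduces to Icc 0 1 modulo ℤ^d. -/
lemma reduce (ψ : (Fin d → ℝ) → ℝ) (hper : ∀ (x : Fin d → ℝ) (k : Fin d → ℤ),
    ψ (x + fun i => (k i : ℝ)) = ψ x) (x : Fin d → ℝ) :
    ∃ y ∈ Icc (0 : Fin d → ℝ) 1, ψ x = ψ y := by
  refine ⟨fun i => Int.fract (x i), ?_, ?_⟩
  · constructor <;> intro i
    · exact Int.fract_nonneg _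
    · exact (Int.fract_lt_one _).le
  · rw [← hper (fun i => Int.fract (x i)) (fun i => ⌊x i⌋)]
    congr 1
    funext i
    rw [Pi.add_apply]; rw [Int.fract]; ring

lemma bdd_of_per {ψ : (Fin d → ℝ) → ℝ} (hc : Continuous ψ)
    (hper : ∀ (x : Fin d → ℝ) (k : Fin d → ℤ), ψ (x + fun i => (k i : ℝ)) = ψ x) :
    BddAbove (Set.range ψ) := by
  obtain ⟨C, hC⟩ := (isCompact_Icc (α := Fin d → ℝ) (a := 0) (b := 1)).exists_bound_of_continuousOn
    hc.continuousOn
  refine ⟨C, ?_⟩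
  rintro _ ⟨x, rfl⟩
  obtain ⟨y, hy, hxy⟩ := reduce ψ hper x
  rw [hxy]
  calc ψ y ≤ ‖ψ y‖ := le_abs_self _
  _ ≤ C := hC y hy


lemma fderiv_per {a : (Fin d → ℝ) → ℝ} (ha : ContDiff ℝ (⊤ : ℕ∞) a) (hper : ZPer a)
    (x : Fin d → ℝ) (k : Fin d → ℤ) :
    fderiv ℝ a (x + fun i => (k i : ℝ)) = fderiv ℝ a x := by
  have hdiff : Differentiable ℝ a := ha.differentiable (by simp)
  have h1 : HasFDerivAt (fun y : Fin d → ℝ => y + fun i => (k i : ℝ))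
      (ContinuousLinearMap.id ℝ (Fin d → ℝ)) x := (hasFDerivAt_id x).add_const _
  have h2 : HasFDerivAt a (fderiv ℝ a (x + fun i => (k i : ℝ)))
      (x + fun i => (k i : ℝ)) := (hdiff _).hasFDerivAt
  have h3 : HasFDerivAt (fun y : Fin d → ℝ => a (y + fun i => (k i : ℝ)))
      ((fderiv ℝ a (x + fun i => (k i : ℝ))).comp (ContinuousLinearMap.id ℝ (Fin d → ℝ))) x :=
    h2.comp x h1
  have h4 : (fun y : Fin d → ℝ => a (y + fun i => (k i : ℝ))) = a := funext fun y => hper y k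
  rw [h4, ContinuousLinearMap.comp_id] at h3
  exact h3.fderiv.symm

lemma ckNorm_nonneg {k : ℕ} {f : (Fin d → ℝ) → ℝ} : 0 ≤ ckNorm k f :=
  Finset.sum_nonneg fun i _ => Real.iSup_nonneg fun x => norm_nonneg _

lemma abs_le_ckNorm {a : (Fin d → ℝ) → ℝ} (ha : ContDiff ℝ (⊤ : ℕ∞) a) (hper : ZPer a)
    (x : Fin d → ℝ) : |a x| ≤ ckNorm 1 a := by
  have hb : BddAbove (Set.range fun x : Fin d → ℝ => ‖iteratedFDeriv ℝ 0 a x‖) := by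
    apply bdd_of_per (d := d)
    · exact (ha.continuous_iteratedFDeriv (m := 0) (by exact_mod_cast le_top)).norm
    · intro y k
      simp only [norm_iteratedFDeriv_zero]
      rw [hper y k]
  have h1 : |a x| ≤ ⨆ x : Fin d → ℝ, ‖iteratedFDeriv ℝ 0 a x‖ := by
    have := le_ciSup hb x
    simpa [norm_iteratedFDeriv_zero, Real.norm_eq_abs] using this
  have h2 : (0:ℝ) ≤ ⨆ x : Fin d → ℝ, ‖iteratedFDeriv ℝ 1 a x‖ :=
    Real.iSup_nonneg fun x => norm_nonneg _
  rw [ckNorm]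
  rw [Finset.sum_range_succ, Finset.sum_range_one]
  linarith

lemma norm_fderiv_le_ckNorm {a : (Fin d → ℝ) → ℝ} (ha : ContDiff ℝ (⊤ : ℕ∞) a) (hper : ZPer a)
    (x : Fin d → ℝ) : ‖fderiv ℝ a x‖ ≤ ckNorm 1 a := by
  have key : ∀ y : Fin d → ℝ, ‖iteratedFDeriv ℝ 1 a y‖ = ‖fderiv ℝ a y‖ := by
    intro y
    rw [← norm_iteratedFDeriv_fderiv (n := 0), norm_iteratedFDeriv_zero]
  have hb : BddAbove (Set.range fun x : Fin d → ℝ => ‖iteratedFDeriv ℝ 1 a x‖) := by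
    apply bdd_of_per (d := d)
    · exact (ha.continuous_iteratedFDeriv (m := 1) (by exact_mod_cast le_top)).norm
    · intro y k
      rw [key, key]
      rw [fderiv_per ha hper y k]
  have h1 : ‖fderiv ℝ a x‖ ≤ ⨆ x : Fin d → ℝ, ‖iteratedFDeriv ℝ 1 a x‖ := by
    have := le_ciSup hb x
    rwa [key x] at this
  have h2 : (0:ℝ) ≤ ⨆ x : Fin d → ℝ, ‖iteratedFDeriv ℝ 0 a x‖ :=
    Real.iSup_nonneg fun x => norm_nonneg _
  rw [ckNorm, Finset.sum_range_succ, Finset.sum_range_one]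
  linarith

lemma lip_of_contDiff {a : (Fin d → ℝ) → ℝ} (ha : ContDiff ℝ (⊤ : ℕ∞) a) (hper : ZPer a)
    (x y : Fin d → ℝ) : |a x - a y| ≤ ckNorm 1 a * ‖x - y‖ := by
  have := Convex.norm_image_sub_le_of_norm_fderiv_le
    (f := a) (s := (univ : Set (Fin d → ℝ))) (C := ckNorm 1 a)
    (fun z _ => (ha.differentiable (by simp)) z)
    (fun z _ => norm_fderiv_le_ckNorm ha hper z) convex_univ (mem_univ y) (mem_univ x)
  simpa [Real.norm_eq_abs] using this



lemma rpow_sub_le {A B r : ℝ} (hB : 0 ≤ B) (hBA : B ≤ A) (hr : 1 ≤ r) :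
    A ^ r - B ^ r ≤ r * A ^ (r - 1) * (A - B) := by
  have hder : ∀ t ∈ Icc B A, HasDerivWithinAt (fun u : ℝ => u ^ r)
      (r * t ^ (r - 1)) (Icc B A) t := fun t _ =>
    (Real.hasDerivAt_rpow_const (Or.inr hr)).hasDerivWithinAt
  have hbound : ∀ t ∈ Icc B A, ‖r * t ^ (r - 1)‖ ≤ r * A ^ (r - 1) := by
    intro t ht
    rw [Real.norm_eq_abs, abs_mul, abs_of_nonneg (by linarith : (0:ℝ) ≤ r),
      abs_of_nonneg (Real.rpow_nonneg (hB.trans ht.1) _)]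
    exact mul_le_mul_of_nonneg_left
      (Real.rpow_le_rpow (hB.trans ht.1) ht.2 (by linarith)) (by linarith)
  have := Convex.norm_image_sub_le_of_norm_hasDerivWithin_le hder hbound (convex_Icc B A)
    (left_mem_Icc.2 hBA) (right_mem_Icc.2 hBA)
  calc A ^ r - B ^ r ≤ ‖A ^ r - B ^ r‖ := le_abs_self _
  _ ≤ r * A ^ (r - 1) * ‖A - B‖ := this
  _ = r * A ^ (r - 1) * (A - B) := by rw [Real.norm_eq_abs, abs_of_nonneg (by linarith)]

lemma abs_rpow_lip {s t M r : ℝ} (hr : 1 ≤ r) (hM : 0 ≤ M) (hs : |s| ≤ M) (ht : |t| ≤ M) :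
    |(|s| ^ r - |t| ^ r)| ≤ r * M ^ (r - 1) * |s - t| := by
  wlog h : |t| ≤ |s| generalizing s t
  · have := this ht hs (le_of_not_ge h)
    rw [abs_sub_comm (|t| ^ r), abs_sub_comm t] at this
    exact this
  have h1 : |t| ^ r ≤ |s| ^ r := Real.rpow_le_rpow (abs_nonneg t) h (by linarith)
  rw [abs_of_nonneg (by linarith)]
  calc |s| ^ r - |t| ^ r ≤ r * |s| ^ (r - 1) * (|s| - |t|) := rpow_sub_le (abs_nonneg t) h hr
  _ ≤ r * M ^ (r - 1) * |s - t| := by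
      apply mul_le_mul
      · exact mul_le_mul_of_nonneg_left (Real.rpow_le_rpow (abs_nonneg s) hs (by linarith))
          (by linarith)
      · exact abs_sub_abs_le_abs_sub s t
      · linarith
      · positivity

lemma real_add_rpow_le {u v r : ℝ} (hu : 0 ≤ u) (hv : 0 ≤ v) (hr : 1 ≤ r) :
    u ^ r + v ^ r ≤ (u + v) ^ r := by
  have := NNReal.add_rpow_le_rpow_add (u.toNNReal) (v.toNNReal) hr
  have h := (NNReal.coe_le_coe).2 this
  push_cast [NNReal.coe_rpow] at h
  rwa [Real.coe_toNNReal _ hu, Real.coe_toNNReal _ hv] at h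

lemma abs_rpow_inv_sub {A B r : ℝ} (hA : 0 ≤ A) (hB : 0 ≤ B) (hr : 1 ≤ r) :
    |A ^ (1/r) - B ^ (1/r)| ≤ |A - B| ^ (1/r) := by
  have hr0 : r ≠ 0 := by linarith
  wlog h : B ≤ A generalizing A B
  · have := this hB hA (le_of_not_ge h)
    rwa [abs_sub_comm (B ^ (1/r)), abs_sub_comm B] at this
  have h1 : B ^ (1/r) ≤ A ^ (1/r) := Real.rpow_le_rpow hB h (by positivity)
  rw [abs_of_nonneg (by linarith), abs_of_nonneg (by linarith)]
  have hu0 : (0:ℝ) ≤ A ^ (1/r) - B ^ (1/r) := by linarith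
  have hAr : (A ^ (1/r)) ^ r = A := by
    rw [← Real.rpow_mul hA, one_div_mul_cancel hr0, Real.rpow_one]
  have hBr : (B ^ (1/r)) ^ r = B := by
    rw [← Real.rpow_mul hB, one_div_mul_cancel hr0, Real.rpow_one]
  have key : (A ^ (1/r) - B ^ (1/r)) ^ r + B ≤ A := by
    have h3 := real_add_rpow_le hu0 (Real.rpow_nonneg hB (1/r)) hr
    have h2 : A ^ (1/r) - B ^ (1/r) + B ^ (1/r) = A ^ (1/r) := by ring
    rw [h2, hAr, hBr] at h3
    exact h3
  calc A ^ (1/r) - B ^ (1/r)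
      = ((A ^ (1/r) - B ^ (1/r)) ^ r) ^ (1/r) := by
        rw [← Real.rpow_mul hu0, mul_one_div, div_self hr0, Real.rpow_one]
  _ ≤ (A - B) ^ (1/r) :=
      Real.rpow_le_rpow (Real.rpow_nonneg hu0 r) (by linarith) (by positivity)

lemma rpow_inv_self_le_two {r : ℝ} (hr : 1 ≤ r) : r ^ (1/r) ≤ 2 := by
  have h1 : r ≤ 2 ^ r := by
    have hn : r < (⌊r⌋₊ : ℝ) + 1 := Nat.lt_floor_add_one r
    have h2 : ((⌊r⌋₊ : ℝ) + 1) ≤ (2:ℝ) ^ (⌊r⌋₊ : ℕ) := by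
      exact_mod_cast Nat.lt_two_pow_self (n := ⌊r⌋₊)
    have h3 : ((2:ℝ) ^ (⌊r⌋₊ : ℕ)) = (2:ℝ) ^ ((⌊r⌋₊ : ℕ) : ℝ) := (Real.rpow_natCast 2 _).symm
    have h4 : (2:ℝ) ^ ((⌊r⌋₊:ℕ) : ℝ) ≤ (2:ℝ) ^ r :=
      Real.rpow_le_rpow_of_exponent_le one_le_two (Nat.floor_le (by linarith))
    linarith
  calc r ^ (1/r) ≤ (2 ^ r) ^ (1/r) :=
        Real.rpow_le_rpow (by linarith) h1 (by positivity)
  _ = 2 := by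
    rw [← Real.rpow_mul (by norm_num), mul_one_div, div_self (by linarith), Real.rpow_one]


end IH

namespace IH2
open IH

variable {d : ℕ}

lemma norm_le_one_cube {y z : Fin d → ℝ} (hy : y ∈ cube d) (hz : z ∈ cube d) :
    ‖y - z‖ ≤ 1 := by
  rw [pi_norm_le_iff_of_nonneg zero_le_one]
  intro i
  have h1 := hy i (mem_univ i)
  have h2 := hz i (mem_univ i)
  rw [Pi.sub_apply, Real.norm_eq_abs, abs_le]
  constructor <;> [linarith [h1.1, h2.2.le]; linarith [h1.2.le, h2.1]]

lemma Sav_lip {σ : ℕ} (hσ : 0 < σ) {g : (Fin d → ℝ) → ℝ} {L : ℝ} (hL : 0 ≤ L)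
    (hlip : ∀ x y, |g x - g y| ≤ L * ‖x - y‖) (y z : Fin d → ℝ) :
    |Sav σ g y - Sav σ g z| ≤ L * ‖y - z‖ / σ := by
  have hσR : (0:ℝ) < σ := by exact_mod_cast hσ
  rw [Sav, Sav, ← mul_sub, ← Finset.sum_sub_distrib, abs_mul,
    abs_of_nonneg (inv_nonneg.2 (by positivity : (0:ℝ) ≤ (σ:ℝ)^d))]
  have hterm : ∀ k : Fin d → Fin σ,
      |g ((σ:ℝ)⁻¹ • (y + fun i => ((k i : ℕ) : ℝ)))
        - g ((σ:ℝ)⁻¹ • (z + fun i => ((k i : ℕ) : ℝ)))| ≤ L * ‖y - z‖ / σ := by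
    intro k
    have := hlip ((σ:ℝ)⁻¹ • (y + fun i => ((k i : ℕ) : ℝ)))
      ((σ:ℝ)⁻¹ • (z + fun i => ((k i : ℕ) : ℝ)))
    have heq : (σ:ℝ)⁻¹ • (y + fun i => ((k i : ℕ) : ℝ))
        - (σ:ℝ)⁻¹ • (z + fun i => ((k i : ℕ) : ℝ)) = (σ:ℝ)⁻¹ • (y - z) := by
      rw [← smul_sub]
      congr 1
      abel
    rw [heq, norm_smul, Real.norm_eq_abs, abs_of_nonneg (inv_nonneg.2 hσR.le)] at this
    calc _ ≤ L * ((σ:ℝ)⁻¹ * ‖y - z‖) := this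
    _ = L * ‖y - z‖ / σ := by ring
  calc ((σ:ℝ)^d)⁻¹ * |∑ k : Fin d → Fin σ, (g ((σ:ℝ)⁻¹ • (y + fun i => ((k i : ℕ) : ℝ)))
        - g ((σ:ℝ)⁻¹ • (z + fun i => ((k i : ℕ) : ℝ))))|
      ≤ ((σ:ℝ)^d)⁻¹ * ∑ k : Fin d → Fin σ, |g ((σ:ℝ)⁻¹ • (y + fun i => ((k i : ℕ) : ℝ)))
        - g ((σ:ℝ)⁻¹ • (z + fun i => ((k i : ℕ) : ℝ)))| := by
        apply mul_le_mul_of_nonneg_left (Finset.abs_sum_le_sum_abs _ _)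
        positivity
  _ ≤ ((σ:ℝ)^d)⁻¹ * ∑ _k : Fin d → Fin σ, L * ‖y - z‖ / σ := by
        apply mul_le_mul_of_nonneg_left (Finset.sum_le_sum fun k _ => hterm k)
        positivity
  _ = L * ‖y - z‖ / σ := by
        rw [Finset.sum_const, Finset.card_univ]
        have hcard : (Fintype.card (Fin d → Fin σ) : ℝ) = (σ:ℝ)^d := by
          rw [Fintype.card_fun]
          push_cast
          simp
        rw [nsmul_eq_mul, hcard, ← mul_assoc, inv_mul_cancel₀ (by positivity), one_mul]

lemma main_est (σ : ℕ) (hσ : 0 < σ) (g h : (Fin d → ℝ) → ℝ)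
    (hg : Continuous g) (hh : Continuous h) (hper : ZPer h) (hhnn : ∀ x, 0 ≤ h x)
    (L : ℝ) (hL : 0 ≤ L) (hlip : ∀ x y, |g x - g y| ≤ L * ‖x - y‖) :
    |(∫ x in cube d, g x * h ((σ:ℝ) • x)) - (∫ x in cube d, g x) * ∫ x in cube d, h x|
      ≤ L / σ * ∫ x in cube d, h x := by
  have hσR : (0:ℝ) < σ := by exact_mod_cast hσ
  have hSc : Continuous (Sav σ g) := Sav_continuous hg
  have e1 := conv_eq σ hσ g h hg hh hper
  have e2 : (∫ x in cube d, g x) = ∫ y in cube d, Sav σ g y := by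
    have := conv_eq σ hσ g (fun _ => 1) hg continuous_const (fun x k => rfl)
    simpa using this
  set c : ℝ := ∫ y in cube d, Sav σ g y with hc
  have hptw : ∀ y ∈ cube d, |Sav σ g y - c| ≤ L / σ := by
    intro y hy
    have hsub : Sav σ g y - c = ∫ z in cube d, (Sav σ g y - Sav σ g z) := by
      rw [integral_sub (integrableOn_cube continuous_const) (integrableOn_cube hSc),
        setIntegral_const_cube]
    rw [hsub]
    have hbnd : ∀ z ∈ cube d, ‖Sav σ g y - Sav σ g z‖ ≤ L / σ := by
      intro z hz
      rw [Real.norm_eq_abs]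
      calc |Sav σ g y - Sav σ g z| ≤ L * ‖y - z‖ / σ := Sav_lip hσ hL hlip y z
      _ ≤ L * 1 / σ := by gcongr; exact norm_le_one_cube hy hz
      _ = L / σ := by rw [mul_one]
    have hb : ‖∫ z in cube d, (Sav σ g y - Sav σ g z)‖
        ≤ L / σ * (volume (cube d)).toReal :=
      norm_setIntegral_le_of_norm_le_const
        (by rw [volume_cube]; exact ENNReal.one_lt_top) hbnd
    rw [Real.norm_eq_abs] at hb
    calc |∫ z in cube d, (Sav σ g y - Sav σ g z)|
        ≤ L / σ * (volume (cube d)).toReal := hb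
    _ = L / σ := by rw [volume_cube]; simp
  -- now the final estimate
  rw [e1, e2]
  have hint1 : IntegrableOn (fun y => Sav σ g y * h y) (cube d) :=
    integrableOn_cube (hSc.mul hh)
  have hint2 : IntegrableOn (fun y => c * h y) (cube d) :=
    integrableOn_cube (continuous_const.mul hh)
  have hch : c * (∫ x in cube d, h x) = ∫ y in cube d, c * h y :=
    (MeasureTheory.integral_const_mul c _).symm
  rw [hch, ← integral_sub hint1 hint2]
  have hbnd2 : ∀ y ∈ cube d, ‖Sav σ g y * h y - c * h y‖ ≤ L / σ * h y := by
    intro y hy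
    rw [Real.norm_eq_abs, ← sub_mul, abs_mul, abs_of_nonneg (hhnn y)]
    exact mul_le_mul_of_nonneg_right (hptw y hy) (hhnn y)
  calc |∫ y in cube d, (Sav σ g y * h y - c * h y)|
      ≤ ∫ y in cube d, ‖Sav σ g y * h y - c * h y‖ := by
        rw [← Real.norm_eq_abs]
        exact norm_integral_le_integral_norm _
  _ ≤ ∫ y in cube d, L / σ * h y := by
        apply setIntegral_mono_on
        · exact (integrableOn_cube ((hSc.mul hh).sub (continuous_const.mul hh))).norm
        · exact integrableOn_cube (continuous_const.mul hh)
        · exact cube_meas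
        · exact hbnd2
  _ = L / σ * ∫ x in cube d, h x := MeasureTheory.integral_const_mul _ _

end IH2

end Helpers

/-- the improved Hölder inequality of Modena–Székelyhidi on `𝕋^d`. -/
theorem improved_Holder (d : ℕ) (hd : 2 ≤ d) (r : ℝ) (hr : 1 ≤ r) :
    ∃ C : ℝ, 0 < C ∧
      ∀ a f : (Fin d → ℝ) → ℝ, ContDiff ℝ (⊤ : ℕ∞) a → ZPer a →
        ContDiff ℝ (⊤ : ℕ∞) f → ZPer f → ∀ σ : ℕ, 1 ≤ σ →
        |lpNorm r (fun x => a x * f ((σ : ℝ) • x)) - lpNorm r a * lpNorm r f|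
          ≤ C * (σ : ℝ) ^ (-(1/r)) * ckNorm 1 a * lpNorm r f := by
  refine ⟨2, by norm_num, ?_⟩
  intro a f ha hpera hf hperf σ hσ
  have hσ0 : 0 < σ := hσ
  have hσR : (0:ℝ) < σ := by exact_mod_cast hσ0
  have hr0 : (0:ℝ) < r := by linarith
  have hr0' : r ≠ 0 := ne_of_gt hr0
  set M := ckNorm 1 a with hM
  have hM0 : 0 ≤ M := IH.ckNorm_nonneg
  set g : (Fin d → ℝ) → ℝ := fun x => |a x| ^ r with hg
  set h : (Fin d → ℝ) → ℝ := fun x => |f x| ^ r with hh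
  have hacont : Continuous a := ha.continuous
  have hfcont : Continuous f := hf.continuous
  have hgc : Continuous g := (continuous_abs.comp hacont).rpow_const (fun x => Or.inr hr0.le)
  have hhc : Continuous h := (continuous_abs.comp hfcont).rpow_const (fun x => Or.inr hr0.le)
  have hperh : ZPer h := by
    intro x k
    simp only [hh]
    rw [hperf x k]
  have hhnn : ∀ x, 0 ≤ h x := fun x => Real.rpow_nonneg (abs_nonneg _) r
  have hlipg : ∀ x y, |g x - g y| ≤ (r * M ^ (r-1) * M) * ‖x - y‖ := by
    intro x y
    have h1 : |g x - g y| ≤ r * M ^ (r - 1) * |a x - a y| := by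
      simp only [hg]
      exact IH.abs_rpow_lip hr hM0 (IH.abs_le_ckNorm ha hpera x) (IH.abs_le_ckNorm ha hpera y)
    calc |g x - g y| ≤ r * M ^ (r - 1) * |a x - a y| := h1
    _ ≤ r * M ^ (r - 1) * (M * ‖x - y‖) := by
        apply mul_le_mul_of_nonneg_left (IH.lip_of_contDiff ha hpera x y)
        positivity
    _ = (r * M ^ (r-1) * M) * ‖x - y‖ := by ring
  have hLnn : (0:ℝ) ≤ r * M ^ (r-1) * M := by positivity
  have hmain := IH2.main_est σ hσ0 g h hgc hhc hperh hhnn _ hLnn hlipg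
  have hInt_h_nn : (0:ℝ) ≤ ∫ x in cube d, h x :=
    setIntegral_nonneg IH.cube_meas fun x _ => hhnn x
  have hInt_g_nn : (0:ℝ) ≤ ∫ x in cube d, g x :=
    setIntegral_nonneg IH.cube_meas fun x _ => Real.rpow_nonneg (abs_nonneg _) r
  have hA'nn : (0:ℝ) ≤ ∫ x in cube d, g x * h ((σ:ℝ) • x) :=
    setIntegral_nonneg IH.cube_meas fun x _ =>
      mul_nonneg (Real.rpow_nonneg (abs_nonneg _) r) (hhnn _)
  have eA : lpNorm r (fun x => a x * f ((σ:ℝ) • x))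
      = (∫ x in cube d, g x * h ((σ:ℝ) • x)) ^ (1/r) := by
    rw [_root_.lpNorm]
    congr 1
    refine setIntegral_congr_fun IH.cube_meas fun x _ => ?_
    simp only [hg, hh, Real.norm_eq_abs, abs_mul]
    exact Real.mul_rpow (abs_nonneg _) (abs_nonneg _)
  have ea : lpNorm r a = (∫ x in cube d, g x) ^ (1/r) := by
    have hfun : (fun x : Fin d → ℝ => ‖a x‖ ^ r) = g := by
      funext x
      simp only [hg, Real.norm_eq_abs]
    rw [_root_.lpNorm, hfun]
  have ef : lpNorm r f = (∫ x in cube d, h x) ^ (1/r) := by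
    have hfun : (fun x : Fin d → ℝ => ‖f x‖ ^ r) = h := by
      funext x
      simp only [hh, Real.norm_eq_abs]
    rw [_root_.lpNorm, hfun]
  have hN0 : 0 ≤ lpNorm r f := by
    rw [ef]
    positivity
  have eB : lpNorm r a * lpNorm r f
      = ((∫ x in cube d, g x) * ∫ x in cube d, h x) ^ (1/r) := by
    rw [ea, ef, ← Real.mul_rpow hInt_g_nn hInt_h_nn]
  have key : |lpNorm r (fun x => a x * f ((σ:ℝ) • x)) - lpNorm r a * lpNorm r f|
      ≤ (r * M ^ (r-1) * M / σ * ∫ x in cube d, h x) ^ (1/r) := by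
    rw [eA, eB]
    refine (IH.abs_rpow_inv_sub hA'nn (mul_nonneg hInt_g_nn hInt_h_nn) hr).trans ?_
    exact Real.rpow_le_rpow (abs_nonneg _) hmain (by positivity)
  have hPM : M ^ (r-1) * M = M ^ r := by
    rcases eq_or_lt_of_le hM0 with hM' | hM'
    · rw [← hM', mul_zero, Real.zero_rpow hr0']
    · calc M ^ (r-1) * M = M ^ (r-1) * M ^ (1:ℝ) := by rw [Real.rpow_one]
      _ = M ^ (r-1+1) := (Real.rpow_add hM' _ _).symm
      _ = M ^ r := by ring_nf
  have hrw : r * M ^ (r-1) * M / (σ:ℝ) * (∫ x in cube d, h x)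
      = r * (M ^ r * (((σ:ℝ))⁻¹ * ∫ x in cube d, h x)) := by
    rw [mul_assoc r, hPM]
    ring
  have hIinv_nn : (0:ℝ) ≤ ((σ:ℝ))⁻¹ * ∫ x in cube d, h x :=
    mul_nonneg (inv_nonneg.2 hσR.le) hInt_h_nn
  have expand : (r * M ^ (r-1) * M / (σ:ℝ) * ∫ x in cube d, h x) ^ (1/r)
      = r ^ (1/r) * (M * ((σ:ℝ) ^ (-(1/r)) * lpNorm r f)) := by
    have e1 : (M ^ r) ^ (1/r) = M := by
      rw [← Real.rpow_mul hM0, mul_one_div, div_self hr0', Real.rpow_one]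
    have e2 : (((σ:ℝ))⁻¹) ^ (1/r) = (σ:ℝ) ^ (-(1/r)) := by
      rw [Real.inv_rpow hσR.le, Real.rpow_neg hσR.le]
    rw [hrw, Real.mul_rpow hr0.le (mul_nonneg (Real.rpow_nonneg hM0 r) hIinv_nn),
      Real.mul_rpow (Real.rpow_nonneg hM0 r) hIinv_nn,
      Real.mul_rpow (inv_nonneg.2 hσR.le) hInt_h_nn, e1, e2, ← ef]
  have final : r ^ (1/r) * (M * ((σ:ℝ) ^ (-(1/r)) * lpNorm r f))
      ≤ 2 * ((σ:ℝ) ^ (-(1/r)) * ckNorm 1 a * lpNorm r f) := by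
    have h2 := IH.rpow_inv_self_le_two hr
    have hfac : (0:ℝ) ≤ M * ((σ:ℝ) ^ (-(1/r)) * lpNorm r f) :=
      mul_nonneg hM0 (mul_nonneg (Real.rpow_nonneg hσR.le _) hN0)
    calc r ^ (1/r) * (M * ((σ:ℝ) ^ (-(1/r)) * lpNorm r f))
        ≤ 2 * (M * ((σ:ℝ) ^ (-(1/r)) * lpNorm r f)) :=
          mul_le_mul_of_nonneg_right h2 hfac
    _ = 2 * ((σ:ℝ) ^ (-(1/r)) * ckNorm 1 a * lpNorm r f) := by rw [hM]; ring
  calc |lpNorm r (fun x => a x * f ((σ:ℝ) • x)) - lpNorm r a * lpNorm r f|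
      ≤ (r * M ^ (r-1) * M / σ * ∫ x in cube d, h x) ^ (1/r) := key
  _ = r ^ (1/r) * (M * ((σ:ℝ) ^ (-(1/r)) * lpNorm r f)) := expand
  _ ≤ 2 * ((σ:ℝ) ^ (-(1/r)) * ckNorm 1 a * lpNorm r f) := final
  _ = 2 * (σ:ℝ) ^ (-(1/r)) * ckNorm 1 a * lpNorm r f := by ring
end

section
/- Let d ≥ 2, let φ, Ω be Mikado profiles and 𝐖_k the rescaled Mikado flows with parameters μ ≥ 1 and σ ∈ ℕ, σ ≥ 1, and let g_k be the shifted temporally intermittent functions with parameters κ ≥ d and α ∈ (0,1). Define the velocity perturbation w(t,x) = Σ_{k=1}^d g_k(t) 𝐖_k(x). Then for every p ∈ [1,∞) there is a constant C, depending only on d, p, G̃, and φ (and independent of σ, μ, κ, α), such that ∫_0^1 ‖w(t,·)‖_{W^{1,p}(𝕋^d)} dt ≤ C κ^{−α} (σμ) μ^{(d−1)(1 − 1/p)}. -/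
open MeasureTheory Filter Topology Set
open scoped ENNReal NNReal BigOperators

section AuxVelocity

open Metric

/-! ### Auxiliary sets -/

def lineSet (μ : ℝ) (σ : ℕ) : Set ℝ :=
  {s : ℝ | ∃ m : ℤ, (σ:ℝ) * s - (m:ℝ) ∈ Set.Icc (0:ℝ) μ⁻¹}

def tubeSet (n : ℕ) (μ : ℝ) (σ : ℕ) (k : Fin (n+1)) : Set (Fin (n+1) → ℝ) :=
  {x | ∀ j : Fin n, x (k.succAbove j) ∈ lineSet μ σ}

def bigS (n : ℕ) (μ : ℝ) (σ : ℕ) : Set (Fin (n+1) → ℝ) := ⋃ k, tubeSet n μ σ k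

def timeSet (κ : ℝ) (σ : ℕ) (d : ℕ) (k : Fin d) : Set ℝ :=
  {t : ℝ | ∃ m : ℤ, (σ:ℝ) * t - (k.val:ℝ)/(d:ℝ) - (m:ℝ) ∈ Set.Icc (0:ℝ) κ⁻¹}

lemma lineSet_meas (μ : ℝ) (σ : ℕ) : MeasurableSet (lineSet μ σ) := by
  have h : lineSet μ σ = ⋃ m : ℤ, (fun s : ℝ => (σ:ℝ) * s - (m:ℝ)) ⁻¹' Set.Icc (0:ℝ) μ⁻¹ := by
    ext s; simp [lineSet]
  rw [h]
  exact MeasurableSet.iUnion fun m => measurableSet_Icc.preimage (by fun_prop)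

lemma tubeSet_meas (n : ℕ) (μ : ℝ) (σ : ℕ) (k : Fin (n+1)) : MeasurableSet (tubeSet n μ σ k) := by
  have h : tubeSet n μ σ k = ⋂ j : Fin n, (fun x : Fin (n+1) → ℝ => x (k.succAbove j)) ⁻¹' lineSet μ σ := by
    ext x; simp [tubeSet]
  rw [h]
  exact MeasurableSet.iInter fun j => (lineSet_meas μ σ).preimage (measurable_pi_apply _)

lemma bigS_meas (n : ℕ) (μ : ℝ) (σ : ℕ) : MeasurableSet (bigS n μ σ) :=
  MeasurableSet.iUnion fun k => tubeSet_meas n μ σ k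

lemma timeSet_meas (κ : ℝ) (σ : ℕ) (d : ℕ) (k : Fin d) : MeasurableSet (timeSet κ σ d k) := by
  have h : timeSet κ σ d k = ⋃ m : ℤ,
      (fun t : ℝ => (σ:ℝ) * t - (k.val:ℝ)/(d:ℝ) - (m:ℝ)) ⁻¹' Set.Icc (0:ℝ) κ⁻¹ := by
    ext t; simp [timeSet]
  rw [h]
  exact MeasurableSet.iUnion fun m => measurableSet_Icc.preimage (by fun_prop)

lemma cube_meas (d : ℕ) : MeasurableSet (cube d) :=
  MeasurableSet.univ_pi fun _ => measurableSet_Ico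

lemma cube_vol (d : ℕ) : volume (cube d) = 1 := by
  rw [cube, volume_pi_pi]
  simp [Real.volume_Ico]

/-! ### Measure estimates -/

lemma lineSet_vol {μ : ℝ} (hμ : 1 ≤ μ) {σ : ℕ} (hσ : 1 ≤ σ) :
    volume (lineSet μ σ ∩ Set.Ico (0:ℝ) 1) ≤ ENNReal.ofReal (3/μ) := by
  have hμ0 : (0:ℝ) < μ := lt_of_lt_of_le one_pos hμ
  have hσ0 : (0:ℝ) < (σ:ℝ) := by exact_mod_cast hσ
  have hμinv : μ⁻¹ ≤ 1 := by
    rw [inv_le_one_iff₀]; right; exact hμ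
  have hsub : lineSet μ σ ∩ Set.Ico (0:ℝ) 1 ⊆
      ⋃ m ∈ Finset.Icc (-1 : ℤ) (σ : ℤ),
        Set.Icc ((m:ℝ)/(σ:ℝ)) ((m:ℝ)/(σ:ℝ) + 1/((σ:ℝ)*μ)) := by
    rintro s ⟨⟨m, hm⟩, hs0, hs1⟩
    rw [Set.mem_Icc] at hm
    obtain ⟨hm0, hm1⟩ := hm
    have hσs : (σ:ℝ) * s < σ := by nlinarith
    have hσs0 : 0 ≤ (σ:ℝ) * s := mul_nonneg hσ0.le hs0
    have h1 : (m:ℝ) ≤ (σ:ℝ) := by linarith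
    have h2 : (-1:ℝ) ≤ (m:ℝ) := by linarith
    have hmF : m ∈ Finset.Icc (-1 : ℤ) (σ : ℤ) := by
      rw [Finset.mem_Icc]
      constructor
      · exact_mod_cast h2
      · exact_mod_cast h1
    have hms : s ∈ Set.Icc ((m:ℝ)/(σ:ℝ)) ((m:ℝ)/(σ:ℝ) + 1/((σ:ℝ)*μ)) := by
      rw [Set.mem_Icc]
      constructor
      · rw [div_le_iff₀ hσ0]; nlinarith
      · have hkey : (m:ℝ)/(σ:ℝ) + 1/((σ:ℝ)*μ) = ((m:ℝ) + μ⁻¹)/(σ:ℝ) := by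
          field_simp
        rw [hkey, le_div_iff₀ hσ0]; nlinarith
    exact Set.mem_biUnion hmF hms
  calc volume (lineSet μ σ ∩ Set.Ico (0:ℝ) 1)
      ≤ volume (⋃ m ∈ Finset.Icc (-1 : ℤ) (σ : ℤ),
          Set.Icc ((m:ℝ)/(σ:ℝ)) ((m:ℝ)/(σ:ℝ) + 1/((σ:ℝ)*μ))) := measure_mono hsub
    _ ≤ ∑ m ∈ Finset.Icc (-1 : ℤ) (σ : ℤ),
          volume (Set.Icc ((m:ℝ)/(σ:ℝ)) ((m:ℝ)/(σ:ℝ) + 1/((σ:ℝ)*μ))) :=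
        measure_biUnion_finset_le _ _
    _ = ∑ m ∈ Finset.Icc (-1 : ℤ) (σ : ℤ), ENNReal.ofReal (1/((σ:ℝ)*μ)) := by
        refine Finset.sum_congr rfl fun m _ => ?_
        rw [Real.volume_Icc]; congr 1; ring
    _ = (Finset.Icc (-1 : ℤ) (σ : ℤ)).card • ENNReal.ofReal (1/((σ:ℝ)*μ)) :=
        Finset.sum_const _
    _ ≤ ENNReal.ofReal (3/μ) := by
        have hcard : (Finset.Icc (-1 : ℤ) (σ : ℤ)).card = σ + 2 := by
          rw [Int.card_Icc]; omega
        rw [hcard, nsmul_eq_mul, ← ENNReal.ofReal_natCast (σ+2),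
          ← ENNReal.ofReal_mul (by positivity)]
        refine ENNReal.ofReal_le_ofReal ?_
        have hσ1 : (1:ℝ) ≤ (σ:ℝ) := by exact_mod_cast hσ
        have h3 : ((σ:ℝ) + 2) ≤ 3 * (σ:ℝ) := by linarith
        calc ((σ+2:ℕ):ℝ) * (1/((σ:ℝ)*μ)) = ((σ:ℝ)+2) * (1/((σ:ℝ)*μ)) := by push_cast; ring
          _ ≤ (3*(σ:ℝ)) * (1/((σ:ℝ)*μ)) := by
              exact mul_le_mul_of_nonneg_right h3 (by positivity)
          _ = 3/μ := by field_simp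

lemma timeSet_vol {κ : ℝ} (hκ : 1 ≤ κ) {σ : ℕ} (hσ : 1 ≤ σ) {d : ℕ} (k : Fin d) :
    volume (timeSet κ σ d k ∩ Set.Ioo (0:ℝ) 1) ≤ ENNReal.ofReal (4/κ) := by
  have hκ0 : (0:ℝ) < κ := lt_of_lt_of_le one_pos hκ
  have hσ0 : (0:ℝ) < (σ:ℝ) := by exact_mod_cast hσ
  have hd0 : (0:ℝ) < (d:ℝ) := by exact_mod_cast k.pos
  have hκinv : κ⁻¹ ≤ 1 := by rw [inv_le_one_iff₀]; right; exact hκ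
  set e : ℝ := (k.val:ℝ)/(d:ℝ) with he
  have he0 : 0 ≤ e := by positivity
  have he1 : e < 1 := by
    rw [he, div_lt_one hd0]; exact_mod_cast k.isLt
  have hsub : timeSet κ σ d k ∩ Set.Ioo (0:ℝ) 1 ⊆
      ⋃ m ∈ Finset.Icc (-2 : ℤ) (σ : ℤ),
        Set.Icc (((m:ℝ)+e)/(σ:ℝ)) (((m:ℝ)+e)/(σ:ℝ) + 1/((σ:ℝ)*κ)) := by
    rintro t ⟨⟨m, hm⟩, ht0, ht1⟩
    rw [Set.mem_Icc] at hm
    obtain ⟨hm0, hm1⟩ := hm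
    have hσt : (σ:ℝ) * t < σ := by nlinarith
    have hσt0 : 0 ≤ (σ:ℝ) * t := by nlinarith
    have h1 : (m:ℝ) ≤ (σ:ℝ) := by linarith
    have h2 : (-2:ℝ) ≤ (m:ℝ) := by linarith
    have hmF : m ∈ Finset.Icc (-2 : ℤ) (σ : ℤ) := by
      rw [Finset.mem_Icc]
      constructor
      · exact_mod_cast h2
      · exact_mod_cast h1
    have hms : t ∈ Set.Icc (((m:ℝ)+e)/(σ:ℝ)) (((m:ℝ)+e)/(σ:ℝ) + 1/((σ:ℝ)*κ)) := by
      rw [Set.mem_Icc]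
      constructor
      · rw [div_le_iff₀ hσ0]; nlinarith
      · have hkey : ((m:ℝ)+e)/(σ:ℝ) + 1/((σ:ℝ)*κ) = ((m:ℝ) + e + κ⁻¹)/(σ:ℝ) := by
          field_simp
        rw [hkey, le_div_iff₀ hσ0]; nlinarith
    exact Set.mem_biUnion hmF hms
  calc volume (timeSet κ σ d k ∩ Set.Ioo (0:ℝ) 1)
      ≤ volume (⋃ m ∈ Finset.Icc (-2 : ℤ) (σ : ℤ),
          Set.Icc (((m:ℝ)+e)/(σ:ℝ)) (((m:ℝ)+e)/(σ:ℝ) + 1/((σ:ℝ)*κ))) := measure_mono hsub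
    _ ≤ ∑ m ∈ Finset.Icc (-2 : ℤ) (σ : ℤ),
          volume (Set.Icc (((m:ℝ)+e)/(σ:ℝ)) (((m:ℝ)+e)/(σ:ℝ) + 1/((σ:ℝ)*κ))) :=
        measure_biUnion_finset_le _ _
    _ = ∑ m ∈ Finset.Icc (-2 : ℤ) (σ : ℤ), ENNReal.ofReal (1/((σ:ℝ)*κ)) := by
        refine Finset.sum_congr rfl fun m _ => ?_
        rw [Real.volume_Icc]; congr 1; ring
    _ = (Finset.Icc (-2 : ℤ) (σ : ℤ)).card • ENNReal.ofReal (1/((σ:ℝ)*κ)) :=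
        Finset.sum_const _
    _ ≤ ENNReal.ofReal (4/κ) := by
        have hcard : (Finset.Icc (-2 : ℤ) (σ : ℤ)).card = σ + 3 := by
          rw [Int.card_Icc]; omega
        rw [hcard, nsmul_eq_mul, ← ENNReal.ofReal_natCast (σ+3),
          ← ENNReal.ofReal_mul (by positivity)]
        refine ENNReal.ofReal_le_ofReal ?_
        have hσ1 : (1:ℝ) ≤ (σ:ℝ) := by exact_mod_cast hσ
        have h3 : ((σ:ℝ) + 3) ≤ 4 * (σ:ℝ) := by linarith
        calc ((σ+3:ℕ):ℝ) * (1/((σ:ℝ)*κ)) = ((σ:ℝ)+3) * (1/((σ:ℝ)*κ)) := by push_cast; ring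
          _ ≤ (4*(σ:ℝ)) * (1/((σ:ℝ)*κ)) := by
              exact mul_le_mul_of_nonneg_right h3 (by positivity)
          _ = 4/κ := by field_simp

lemma tubeSet_vol {n : ℕ} {μ : ℝ} (hμ : 1 ≤ μ) {σ : ℕ} (hσ : 1 ≤ σ) (k : Fin (n+1)) :
    volume (tubeSet n μ σ k ∩ cube (n+1)) ≤ ENNReal.ofReal ((3/μ)^n) := by
  have hμ0 : (0:ℝ) < μ := lt_of_lt_of_le one_pos hμ
  have hset : tubeSet n μ σ k ∩ cube (n+1) =
      Set.univ.pi (fun i => if i = k then Set.Ico (0:ℝ) 1 else lineSet μ σ ∩ Set.Ico 0 1) := by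
    ext x
    constructor
    · rintro ⟨hT, hC⟩
      intro i _
      dsimp only
      by_cases hik : i = k
      · rw [if_pos hik]; exact hC i (Set.mem_univ i)
      · rw [if_neg hik]
        obtain ⟨j, hj⟩ := Fin.exists_succAbove_eq (show i ≠ k from hik)
        exact ⟨by rw [← hj]; exact hT j, hC i (Set.mem_univ i)⟩
    · intro h
      constructor
      · intro j
        have hne : k.succAbove j ≠ k := Fin.succAbove_ne k j
        have h' := h (k.succAbove j) (Set.mem_univ _)
        dsimp only at h'
        rw [if_neg hne] at h'
        exact h'.1
      · intro i _
        have h' := h i (Set.mem_univ i)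
        dsimp only at h'
        by_cases hik : i = k
        · rwa [if_pos hik] at h'
        · rw [if_neg hik] at h'; exact h'.2
  rw [hset, volume_pi_pi]
  rw [Fin.prod_univ_succAbove
    (fun i => volume (if i = k then Set.Ico (0:ℝ) 1 else lineSet μ σ ∩ Set.Ico 0 1)) k]
  simp only [if_pos rfl]
  have hstep : ∀ j : Fin n,
      volume (if k.succAbove j = k then Set.Ico (0:ℝ) 1 else lineSet μ σ ∩ Set.Ico 0 1)
        ≤ ENNReal.ofReal (3/μ) := by
    intro j
    rw [if_neg (Fin.succAbove_ne k j)]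
    exact lineSet_vol hμ hσ
  calc volume (Set.Ico (0:ℝ) 1) *
        ∏ j : Fin n, volume (if k.succAbove j = k then Set.Ico (0:ℝ) 1 else lineSet μ σ ∩ Set.Ico 0 1)
      ≤ 1 * ∏ j : Fin n, ENNReal.ofReal (3/μ) := by
        refine mul_le_mul' ?_ (Finset.prod_le_prod' fun j _ => hstep j)
        rw [Real.volume_Ico]; simp
    _ = ENNReal.ofReal ((3/μ)^n) := by
        rw [one_mul, Finset.prod_const, Finset.card_univ, Fintype.card_fin,
          ← ENNReal.ofReal_pow (by positivity)]

lemma bigS_vol {n : ℕ} {μ : ℝ} (hμ : 1 ≤ μ) {σ : ℕ} (hσ : 1 ≤ σ) :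
    volume (bigS n μ σ ∩ cube (n+1)) ≤ ENNReal.ofReal (((n:ℝ)+1) * (3/μ)^n) := by
  have hμ0 : (0:ℝ) < μ := lt_of_lt_of_le one_pos hμ
  have h1 : bigS n μ σ ∩ cube (n+1) = ⋃ k, (tubeSet n μ σ k ∩ cube (n+1)) := by
    rw [bigS, Set.iUnion_inter]
  rw [h1]
  calc volume (⋃ k, (tubeSet n μ σ k ∩ cube (n+1)))
      ≤ ∑ k : Fin (n+1), volume (tubeSet n μ σ k ∩ cube (n+1)) := by
        have := measure_biUnion_finset_le (μ := volume) Finset.univ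
          (fun k : Fin (n+1) => tubeSet n μ σ k ∩ cube (n+1))
        simpa using this
    _ ≤ ∑ _k : Fin (n+1), ENNReal.ofReal ((3/μ)^n) :=
        Finset.sum_le_sum fun k _ => tubeSet_vol hμ hσ k
    _ = ENNReal.ofReal (((n:ℝ)+1) * (3/μ)^n) := by
        rw [Finset.sum_const, Finset.card_univ, Fintype.card_fin, nsmul_eq_mul,
          ← ENNReal.ofReal_natCast (n+1), ← ENNReal.ofReal_mul (by positivity)]
        congr 1
        push_cast
        ring

/-! ### The support margin δ -/

lemma exists_delta {n : ℕ} (φ : (Fin n → ℝ) → ℝ) (Ω : (Fin n → ℝ) → (Fin n → ℝ))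
    (hΩc : HasCompactSupport Ω)
    (hΩsupp : tsupport Ω ⊆ Set.univ.pi fun _ => Set.Ioo (0:ℝ) 1)
    (hdiv : ∀ y, divF Ω y = φ y) :
    ∃ δ : ℝ, 0 < δ ∧ ∀ y, φ y ≠ 0 → ∀ j, δ ≤ y j ∧ y j ≤ 1 - δ := by
  have hsupp : ∀ y, φ y ≠ 0 → y ∈ tsupport Ω := by
    intro y hy
    by_contra hyn
    have hev : Ω =ᶠ[nhds y] 0 := notMem_tsupport_iff_eventuallyEq.1 hyn
    apply hy
    rw [← hdiv y]
    have hz : ∀ i, fderiv ℝ (fun z => Ω z i) y = 0 := by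
      intro i
      have hev' : (fun z => Ω z i) =ᶠ[nhds y] (fun _ => (0:ℝ)) :=
        hev.mono fun z hz => by
          show Ω z i = 0
          rw [hz]
          rfl
      rw [hev'.fderiv_eq]
      exact fderiv_const_apply 0
    simp [divF, hz]
  obtain ⟨r, hr0, hrsub⟩ := hΩc.exists_thickening_subset_open
    (isOpen_set_pi Set.finite_univ fun i _ => isOpen_Ioo) hΩsupp
  refine ⟨r/2, by positivity, fun y hy j => ?_⟩
  have hyK := hsupp y hy
  constructor
  · have hmem : Function.update y j (y j - r/2) ∈ Metric.thickening r (tsupport Ω) := by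
      rw [Metric.mem_thickening_iff]
      refine ⟨y, hyK, ?_⟩
      rw [dist_pi_lt_iff hr0]
      intro i
      rcases eq_or_ne i j with h | h
      · subst h; rw [Function.update_self, Real.dist_eq]
        rw [show y i - r/2 - y i = -(r/2) by ring, abs_neg, abs_of_pos (by positivity)]
        linarith
      · rw [Function.update_of_ne h, dist_self]; exact hr0
    have := hrsub hmem j (Set.mem_univ j)
    rw [Function.update_self] at this
    linarith [this.1]
  · have hmem : Function.update y j (y j + r/2) ∈ Metric.thickening r (tsupport Ω) := by
      rw [Metric.mem_thickening_iff]
      refine ⟨y, hyK, ?_⟩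
      rw [dist_pi_lt_iff hr0]
      intro i
      rcases eq_or_ne i j with h | h
      · subst h; rw [Function.update_self, Real.dist_eq]
        rw [show y i + r/2 - y i = r/2 by ring, abs_of_pos (by positivity)]
        linarith
      · rw [Function.update_of_ne h, dist_self]; exact hr0
    have := hrsub hmem j (Set.mem_univ j)
    rw [Function.update_self] at this
    linarith [this.2]

/-! ### Local structure of MikPhi -/

lemma mikPhi_locrep {n : ℕ} (hn : 1 ≤ n) (φ : (Fin n → ℝ) → ℝ) {δ : ℝ} (hδ0 : 0 < δ)
    (hsupp : ∀ y, φ y ≠ 0 → ∀ j, δ ≤ y j ∧ y j ≤ 1 - δ)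
    {μ : ℝ} (hμ : 1 ≤ μ) {σ : ℕ} (hσ : 1 ≤ σ) (k : Fin (n+1)) (x : Fin (n+1) → ℝ) :
    ∃ ε : ℝ, 0 < ε ∧ ∃ c : Fin n → ℤ, ∀ y, dist y x < ε →
      MikPhi φ μ σ k y = φ (fun j => μ * ((σ:ℝ) * y (k.succAbove j) - (c j : ℝ))) := by
  have hμ0 : (0:ℝ) < μ := lt_of_lt_of_le one_pos hμ
  have hσ0 : (0:ℝ) < (σ:ℝ) := by exact_mod_cast hσ
  have hne : (Finset.univ : Finset (Fin n)).Nonempty := ⟨⟨0, hn⟩, Finset.mem_univ _⟩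
  set z : Fin n → ℝ := fun j => (σ:ℝ) * x (k.succAbove j) with hz
  set c : Fin n → ℤ := fun j => ⌊z j⌋ with hc
  set η := Finset.univ.inf' hne (fun j => ((c j:ℝ) + 1 - z j)) with hη
  have hη0 : 0 < η := by
    rw [hη, Finset.lt_inf'_iff]
    intro j _
    have := Int.lt_floor_add_one (z j)
    simp only [hc]
    linarith
  refine ⟨min (δ/μ) η / (2*(σ:ℝ)), div_pos (lt_min (div_pos hδ0 hμ0) hη0) (by positivity), c,
    fun y hy => ?_⟩
  have hyj : ∀ j, |(σ:ℝ) * y (k.succAbove j) - z j| < min (δ/μ) η / 2 := by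
    intro j
    have h1 : |y (k.succAbove j) - x (k.succAbove j)| < min (δ/μ) η / (2*(σ:ℝ)) := by
      calc |y (k.succAbove j) - x (k.succAbove j)|
          = dist (y (k.succAbove j)) (x (k.succAbove j)) := (Real.dist_eq _ _).symm
        _ ≤ dist y x := dist_le_pi_dist y x _
        _ < _ := hy
    have h2 : (σ:ℝ) * y (k.succAbove j) - z j = (σ:ℝ) * (y (k.succAbove j) - x (k.succAbove j)) := by
      rw [hz]; ring
    rw [h2, abs_mul, abs_of_pos hσ0]
    calc (σ:ℝ) * |y (k.succAbove j) - x (k.succAbove j)|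
        < (σ:ℝ) * (min (δ/μ) η / (2*(σ:ℝ))) := by
          exact mul_lt_mul_of_pos_left h1 hσ0
      _ = min (δ/μ) η / 2 := by field_simp
  simp only [MikPhi]
  refine tsum_eq_single c fun m hm => ?_
  by_contra h0
  obtain ⟨j₀, hj₀⟩ : ∃ j, m j ≠ c j := Function.ne_iff.1 hm
  have hco := hsupp _ h0 j₀
  set a : ℝ := (σ:ℝ) * y (k.succAbove j₀) with ha
  have hco1 : δ ≤ μ * (a - (m j₀ : ℝ)) := hco.1
  have hco2 : μ * (a - (m j₀ : ℝ)) ≤ 1 - δ := hco.2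
  have habs := hyj j₀
  have habs1 : z j₀ - a < min (δ/μ) η / 2 := by
    have := abs_lt.1 habs
    linarith [this.1]
  have habs2 : a - z j₀ < min (δ/μ) η / 2 := by
    have := abs_lt.1 habs
    linarith [this.2]
  have hmin1 : min (δ/μ) η ≤ δ/μ := min_le_left _ _
  have hmin2 : min (δ/μ) η ≤ η := min_le_right _ _
  have h4 : (c j₀ : ℝ) ≤ z j₀ := Int.floor_le _
  have h6 : η ≤ (c j₀ : ℝ) + 1 - z j₀ := by
    rw [hη]
    exact Finset.inf'_le _ (Finset.mem_univ j₀)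
  rcases lt_or_gt_of_ne hj₀ with hlt | hgt
  · -- m j₀ < c j₀
    have hmc : (m j₀ : ℝ) + 1 ≤ (c j₀ : ℝ) := by exact_mod_cast hlt
    have e1 : μ * (z j₀ - a) < δ/2 := by
      have : z j₀ - a < δ/(2*μ) := by
        calc z j₀ - a < min (δ/μ) η / 2 := habs1
          _ ≤ (δ/μ)/2 := by linarith
          _ = δ/(2*μ) := by ring
      calc μ * (z j₀ - a) < μ * (δ/(2*μ)) := mul_lt_mul_of_pos_left this hμ0
        _ = δ/2 := by field_simp
    have e2 : 0 ≤ μ * (z j₀ - (c j₀ : ℝ)) := mul_nonneg hμ0.le (by linarith)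
    have e3 : μ ≤ μ * ((c j₀ : ℝ) - (m j₀ : ℝ)) := by
      have : (1:ℝ) ≤ (c j₀ : ℝ) - (m j₀ : ℝ) := by linarith
      nlinarith
    have ekey : μ * (a - (m j₀ : ℝ)) =
        -(μ * (z j₀ - a)) + μ * (z j₀ - (c j₀ : ℝ)) + μ * ((c j₀ : ℝ) - (m j₀ : ℝ)) := by ring
    rw [ekey] at hco2
    linarith
  · -- c j₀ < m j₀
    have hmc : (c j₀ : ℝ) + 1 ≤ (m j₀ : ℝ) := by exact_mod_cast hgt
    have hpos : 0 < μ * (a - (m j₀ : ℝ)) := lt_of_lt_of_le hδ0 hco1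
    have hneg : a - (m j₀ : ℝ) < 0 := by
      have h7 : a - z j₀ < η/2 := by linarith
      linarith
    have : μ * (a - (m j₀ : ℝ)) < 0 := mul_neg_of_pos_of_neg hμ0 hneg
    linarith

lemma mikPhi_abs_le {n : ℕ} (hn : 1 ≤ n) (φ : (Fin n → ℝ) → ℝ) {δ : ℝ} (hδ0 : 0 < δ)
    (hsupp : ∀ y, φ y ≠ 0 → ∀ j, δ ≤ y j ∧ y j ≤ 1 - δ)
    {μ : ℝ} (hμ : 1 ≤ μ) {σ : ℕ} (hσ : 1 ≤ σ)
    {M₀ : ℝ} (hM₀ : ∀ y, |φ y| ≤ M₀) (k : Fin (n+1)) (x : Fin (n+1) → ℝ) :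
    |MikPhi φ μ σ k x| ≤ M₀ := by
  obtain ⟨ε, hε, c, hrep⟩ := mikPhi_locrep hn φ hδ0 hsupp hμ hσ k x
  rw [hrep x (by rwa [dist_self])]
  exact hM₀ _

lemma mikPhi_vanish {n : ℕ} (φ : (Fin n → ℝ) → ℝ) {δ : ℝ} (hδ0 : 0 < δ)
    (hsupp : ∀ y, φ y ≠ 0 → ∀ j, δ ≤ y j ∧ y j ≤ 1 - δ)
    {μ : ℝ} (hμ : 1 ≤ μ) {σ : ℕ} (hσ : 1 ≤ σ) (k : Fin (n+1)) {x : Fin (n+1) → ℝ}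
    {j₀ : Fin n} (hx : ∀ m : ℤ, (σ:ℝ) * x (k.succAbove j₀) - (m:ℝ) ∉ Set.Icc (0:ℝ) μ⁻¹) :
    ∃ ε : ℝ, 0 < ε ∧ ∀ y, dist y x < ε → MikPhi φ μ σ k y = 0 := by
  have hμ0 : (0:ℝ) < μ := lt_of_lt_of_le one_pos hμ
  have hσ0 : (0:ℝ) < (σ:ℝ) := by exact_mod_cast hσ
  set u : ℝ := (σ:ℝ) * x (k.succAbove j₀) with hu
  set m₀ : ℤ := ⌊u⌋ with hm₀
  have h1 : 0 ≤ u - (m₀:ℝ) := by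
    rw [hm₀]; exact sub_nonneg.2 (Int.floor_le u)
  have h2 : u - (m₀:ℝ) < 1 := by
    rw [hm₀]
    have := Int.lt_floor_add_one u
    linarith
  have h3 : μ⁻¹ < u - (m₀:ℝ) := by
    by_contra hcon
    push_neg at hcon
    exact hx m₀ ⟨h1, hcon⟩
  have hIlt : 0 < min (u - (m₀:ℝ) - μ⁻¹) ((m₀:ℝ) + 1 - u) :=
    lt_min (by linarith) (by linarith)
  refine ⟨min (u - (m₀:ℝ) - μ⁻¹) ((m₀:ℝ) + 1 - u) / (σ:ℝ), div_pos hIlt hσ0, fun y hy => ?_⟩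
  have hdy : |y (k.succAbove j₀) - x (k.succAbove j₀)| <
      min (u - (m₀:ℝ) - μ⁻¹) ((m₀:ℝ) + 1 - u) / (σ:ℝ) := by
    calc |y (k.succAbove j₀) - x (k.succAbove j₀)|
        = dist (y (k.succAbove j₀)) (x (k.succAbove j₀)) := (Real.dist_eq _ _).symm
      _ ≤ dist y x := dist_le_pi_dist y x _
      _ < _ := hy
  set v : ℝ := (σ:ℝ) * y (k.succAbove j₀) with hv
  have hvu : |v - u| < min (u - (m₀:ℝ) - μ⁻¹) ((m₀:ℝ) + 1 - u) := by
    have h5 : v - u = (σ:ℝ) * (y (k.succAbove j₀) - x (k.succAbove j₀)) := by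
      rw [hv, hu]; ring
    rw [h5, abs_mul, abs_of_pos hσ0]
    calc (σ:ℝ) * |y (k.succAbove j₀) - x (k.succAbove j₀)|
        < (σ:ℝ) * (min (u - (m₀:ℝ) - μ⁻¹) ((m₀:ℝ) + 1 - u) / (σ:ℝ)) :=
          mul_lt_mul_of_pos_left hdy hσ0
      _ = min (u - (m₀:ℝ) - μ⁻¹) ((m₀:ℝ) + 1 - u) := by field_simp
  have hv1 : (m₀:ℝ) + μ⁻¹ < v := by
    have := abs_lt.1 hvu
    have hle := min_le_left (u - (m₀:ℝ) - μ⁻¹) ((m₀:ℝ) + 1 - u)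
    linarith [this.1]
  have hv2 : v < (m₀:ℝ) + 1 := by
    have := abs_lt.1 hvu
    have hle := min_le_right (u - (m₀:ℝ) - μ⁻¹) ((m₀:ℝ) + 1 - u)
    linarith [this.2]
  have hterm : ∀ m : Fin n → ℤ, φ (fun j => μ * ((σ:ℝ) * y (k.succAbove j) - (m j : ℝ))) = 0 := by
    intro m
    by_contra hφ0
    have hco := hsupp _ hφ0 j₀
    have hco1 : δ ≤ μ * (v - (m j₀ : ℝ)) := hco.1
    have hco2 : μ * (v - (m j₀ : ℝ)) ≤ 1 - δ := hco.2
    have hA : 0 < v - (m j₀ : ℝ) := by nlinarith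
    have hB : v - (m j₀ : ℝ) ≤ μ⁻¹ := by
      have hq : μ * (v - (m j₀:ℝ)) ≤ 1 := by linarith
      rw [← mul_le_mul_iff_right₀ hμ0, mul_inv_cancel₀ (ne_of_gt hμ0)]
      exact hq
    have hup : (m j₀ : ℝ) < (m₀:ℝ) + 1 := by linarith
    have hdown : (m₀:ℝ) < (m j₀ : ℝ) := by linarith
    have hupz : m j₀ < m₀ + 1 := by exact_mod_cast hup
    have hdownz : m₀ < m j₀ := by exact_mod_cast hdown
    omega
  simp only [MikPhi]
  rw [show (fun m : Fin n → ℤ => φ (fun j => μ * ((σ:ℝ) * y (k.succAbove j) - (m j : ℝ))))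
      = fun _ => (0:ℝ) from funext hterm]
  exact tsum_zero

/-! ### Norm of basis vector -/

lemma norm_single_le (n : ℕ) (k : Fin (n+1)) : ‖(Pi.single k 1 : Fin (n+1) → ℝ)‖ ≤ 1 := by
  rw [pi_norm_le_iff_of_nonneg zero_le_one]
  intro i
  rcases eq_or_ne i k with h | h
  · subst h; rw [Pi.single_eq_same]; simp
  · rw [Pi.single_eq_of_ne h]; simp

/-! ### Vanishing of the velocity field off bigS -/

lemma sum_vanish {n : ℕ} (hn : 1 ≤ n) (φ : (Fin n → ℝ) → ℝ) {δ : ℝ} (hδ0 : 0 < δ)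
    (hsupp : ∀ y, φ y ≠ 0 → ∀ j, δ ≤ y j ∧ y j ≤ 1 - δ)
    {μ : ℝ} (hμ : 1 ≤ μ) {σ : ℕ} (hσ : 1 ≤ σ) (g : Fin (n+1) → ℝ) {x : Fin (n+1) → ℝ}
    (hx : x ∉ bigS n μ σ) :
    (∑ k, g k • MikW φ μ σ k x) = 0 ∧
      fderiv ℝ (fun y => ∑ k, g k • MikW φ μ σ k y) x = 0 := by
  have hxk : ∀ k : Fin (n+1), ∃ ε : ℝ, 0 < ε ∧ ∀ y, dist y x < ε → MikPhi φ μ σ k y = 0 := by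
    intro k
    have hxt : x ∉ tubeSet n μ σ k := fun h => hx (Set.mem_iUnion.2 ⟨k, h⟩)
    have : ∃ j₀ : Fin n, x (k.succAbove j₀) ∉ lineSet μ σ := by
      by_contra hcon
      push_neg at hcon
      exact hxt fun j => hcon j
    obtain ⟨j₀, hj₀⟩ := this
    have hj₀' : ∀ m : ℤ, (σ:ℝ) * x (k.succAbove j₀) - (m:ℝ) ∉ Set.Icc (0:ℝ) μ⁻¹ := by
      intro m hm
      exact hj₀ ⟨m, hm⟩
    exact mikPhi_vanish φ hδ0 hsupp hμ hσ k hj₀'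
  choose ε hε hvan using hxk
  have hne : (Finset.univ : Finset (Fin (n+1))).Nonempty := ⟨0, Finset.mem_univ _⟩
  set εm := Finset.univ.inf' hne ε with hεm
  have hεm0 : 0 < εm := by
    rw [hεm, Finset.lt_inf'_iff]
    exact fun k _ => hε k
  have hF : ∀ y, dist y x < εm → (∑ k, g k • MikW φ μ σ k y) = 0 := by
    intro y hy
    refine Finset.sum_eq_zero fun k _ => ?_
    have hk : dist y x < ε k := lt_of_lt_of_le hy (by rw [hεm]; exact Finset.inf'_le _ (Finset.mem_univ k))
    simp only [MikW]
    rw [hvan k y hk, mul_zero, zero_smul, smul_zero]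
  refine ⟨hF x (by rwa [dist_self]), ?_⟩
  have heq : (fun y => ∑ k, g k • MikW φ μ σ k y) =ᶠ[nhds x] (fun _ => (0 : Fin (n+1) → ℝ)) := by
    filter_upwards [Metric.ball_mem_nhds x hεm0] with y hy
    exact hF y (by rwa [Metric.mem_ball] at hy)
  rw [heq.fderiv_eq]
  exact fderiv_const_apply 0

/-! ### Derivative bound -/

lemma sum_fderiv_bound {n : ℕ} (hn : 1 ≤ n) {φ : (Fin n → ℝ) → ℝ}
    (hφs : ContDiff ℝ (⊤ : ℕ∞) φ) {δ : ℝ} (hδ0 : 0 < δ)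
    (hsupp : ∀ y, φ y ≠ 0 → ∀ j, δ ≤ y j ∧ y j ≤ 1 - δ)
    {μ : ℝ} (hμ : 1 ≤ μ) {σ : ℕ} (hσ : 1 ≤ σ)
    {M₁ : ℝ} (hM₁ : ∀ y, ‖fderiv ℝ φ y‖ ≤ M₁)
    (g : Fin (n+1) → ℝ) (x : Fin (n+1) → ℝ) :
    ‖fderiv ℝ (fun y => ∑ k, g k • MikW φ μ σ k y) x‖ ≤
      (∑ k, |g k|) * (μ^n * (μ * (σ:ℝ) * M₁)) := by
  have hμ0 : (0:ℝ) < μ := lt_of_lt_of_le one_pos hμ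
  have hσ0 : (0:ℝ) < (σ:ℝ) := by exact_mod_cast hσ
  have hM₁0 : 0 ≤ M₁ := le_trans (norm_nonneg _) (hM₁ 0)
  have H : ∀ k : Fin (n+1), ∃ ε : ℝ, 0 < ε ∧ ∃ c : Fin n → ℤ, ∀ y, dist y x < ε →
      MikPhi φ μ σ k y = φ (fun j => μ * ((σ:ℝ) * y (k.succAbove j) - (c j : ℝ))) :=
    fun k => mikPhi_locrep hn φ hδ0 hsupp hμ hσ k x
  choose ε hε hrest using H
  choose c hrep using hrest
  have hne : (Finset.univ : Finset (Fin (n+1))).Nonempty := ⟨0, Finset.mem_univ _⟩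
  set εm := Finset.univ.inf' hne ε with hεm
  have hεm0 : 0 < εm := by
    rw [hεm, Finset.lt_inf'_iff]
    exact fun k _ => hε k
  -- the linear maps
  set L : Fin (n+1) → ((Fin (n+1) → ℝ) →L[ℝ] (Fin n → ℝ)) :=
    fun k => ContinuousLinearMap.pi (fun j => (μ * (σ:ℝ)) • ContinuousLinearMap.proj (k.succAbove j)) with hL
  have hLapp : ∀ k (y : Fin (n+1) → ℝ) (j : Fin n), L k y j = μ * (σ:ℝ) * y (k.succAbove j) := by
    intro k y j
    simp [hL, ContinuousLinearMap.proj_apply, smul_eq_mul]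
  have hLnorm : ∀ k, ‖L k‖ ≤ μ * (σ:ℝ) := by
    intro k
    refine ContinuousLinearMap.opNorm_le_bound _ (by positivity) fun y => ?_
    rw [pi_norm_le_iff_of_nonneg (by positivity)]
    intro j
    rw [hLapp, Real.norm_eq_abs, abs_mul, abs_of_pos (by positivity)]
    have h1 : |y (k.succAbove j)| ≤ ‖y‖ := by
      rw [← Real.norm_eq_abs]; exact norm_le_pi_norm y _
    exact mul_le_mul_of_nonneg_left h1 (by positivity)
  -- derivative of the affine inner map
  have hw : ∀ k : Fin (n+1), HasFDerivAt
      (fun y : Fin (n+1) → ℝ => (fun j => μ * ((σ:ℝ) * y (k.succAbove j) - (c k j : ℝ))) : _ → (Fin n → ℝ))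
      (L k) x := by
    intro k
    have hfun : (fun y : Fin (n+1) → ℝ => (fun j => μ * ((σ:ℝ) * y (k.succAbove j) - (c k j : ℝ))) : _ → (Fin n → ℝ))
        = fun y => L k y + (fun j => -(μ * (c k j : ℝ))) := by
      funext y j
      simp only [Pi.add_apply, hLapp]
      ring
    rw [hfun]
    exact (L k).hasFDerivAt.add_const _
  -- derivative of each summand
  set w : Fin (n+1) → (Fin (n+1) → ℝ) → (Fin n → ℝ) :=
    fun k y => fun j => μ * ((σ:ℝ) * y (k.succAbove j) - (c k j : ℝ)) with hwdef
  set D : Fin (n+1) → ((Fin (n+1) → ℝ) →L[ℝ] (Fin (n+1) → ℝ)) :=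
    fun k => (((g k * μ^n) • ((fderiv ℝ φ (w k x)).comp (L k))).smulRight
      (Pi.single k 1 : Fin (n+1) → ℝ)) with hD
  have hDk : ∀ k : Fin (n+1), HasFDerivAt
      (fun y => ((g k * μ^n) * φ (w k y)) • (Pi.single k 1 : Fin (n+1) → ℝ)) (D k) x := by
    intro k
    have h2 : HasFDerivAt φ (fderiv ℝ φ (w k x)) (w k x) :=
      (hφs.differentiable (by simp) (w k x)).hasFDerivAt
    have h3 : HasFDerivAt (fun y => φ (w k y)) ((fderiv ℝ φ (w k x)).comp (L k)) x :=
      h2.comp x (hw k)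
    exact (h3.const_mul (g k * μ^n)).smul_const _
  have hsum : HasFDerivAt
      (fun y => ∑ k, ((g k * μ^n) * φ (w k y)) • (Pi.single k 1 : Fin (n+1) → ℝ))
      (∑ k, D k) x := HasFDerivAt.fun_sum fun k _ => hDk k
  have heq : (fun y => ∑ k, g k • MikW φ μ σ k y) =ᶠ[nhds x]
      (fun y => ∑ k, ((g k * μ^n) * φ (w k y)) • (Pi.single k 1 : Fin (n+1) → ℝ)) := by
    filter_upwards [Metric.ball_mem_nhds x hεm0] with y hy
    refine Finset.sum_congr rfl fun k _ => ?_
    have hk : dist y x < ε k :=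
      lt_of_lt_of_le (by rwa [Metric.mem_ball] at hy) (by rw [hεm]; exact Finset.inf'_le _ (Finset.mem_univ k))
    simp only [MikW]
    rw [hrep k y hk, smul_smul, ← mul_assoc]
  rw [heq.fderiv_eq, hsum.fderiv]
  calc ‖∑ k, D k‖ ≤ ∑ k, ‖D k‖ := norm_sum_le _ _
    _ ≤ ∑ k, |g k| * (μ^n * (μ * (σ:ℝ) * M₁)) := by
        refine Finset.sum_le_sum fun k _ => ?_
        rw [hD]
        rw [ContinuousLinearMap.norm_smulRight_apply]
        have hB : ‖(fderiv ℝ φ (w k x)).comp (L k)‖ ≤ M₁ * (μ * (σ:ℝ)) := by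
          calc ‖(fderiv ℝ φ (w k x)).comp (L k)‖
              ≤ ‖fderiv ℝ φ (w k x)‖ * ‖L k‖ := ContinuousLinearMap.opNorm_comp_le _ _
            _ ≤ M₁ * (μ * (σ:ℝ)) := by
                exact mul_le_mul (hM₁ _) (hLnorm k) (norm_nonneg _) hM₁0
        calc ‖(g k * μ^n) • ((fderiv ℝ φ (w k x)).comp (L k))‖ * ‖(Pi.single k 1 : Fin (n+1) → ℝ)‖
            ≤ ‖(g k * μ^n) • ((fderiv ℝ φ (w k x)).comp (L k))‖ * 1 := by
              exact mul_le_mul_of_nonneg_left (norm_single_le n k) (norm_nonneg _)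
          _ ≤ |g k * μ^n| * ‖(fderiv ℝ φ (w k x)).comp (L k)‖ := by
              rw [mul_one]
              have h := norm_smul_le (g k * μ^n) ((fderiv ℝ φ (w k x)).comp (L k))
              rwa [Real.norm_eq_abs] at h
          _ ≤ |g k * μ^n| * (M₁ * (μ * (σ:ℝ))) := by
              exact mul_le_mul_of_nonneg_left hB (abs_nonneg _)
          _ = |g k| * (μ^n * (μ * (σ:ℝ) * M₁)) := by
              rw [abs_mul, abs_of_nonneg (pow_nonneg hμ0.le n)]
              ring
    _ = (∑ k, |g k|) * (μ^n * (μ * (σ:ℝ) * M₁)) := (Finset.sum_mul _ _ _).symm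

/-! ### Lp bound via indicator domination -/

lemma lpNorm_nonneg {d : ℕ} {E : Type*} [NormedAddCommGroup E] (p : ℝ) (f : (Fin d → ℝ) → E) :
    0 ≤ lpNorm p f :=
  Real.rpow_nonneg (integral_nonneg fun x => Real.rpow_nonneg (norm_nonneg _) p) _

lemma aux_lp_bound {d : ℕ} {E : Type*} [NormedAddCommGroup E] {p : ℝ} (hp : 1 ≤ p)
    (f : (Fin d → ℝ) → E) {S : Set (Fin d → ℝ)} (hS : MeasurableSet S)
    {c : ℝ} (hc : 0 ≤ c) (hb : ∀ x, ‖f x‖ ≤ c) (hz : ∀ x, x ∉ S → f x = 0) :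
    lpNorm p f ≤ c * ((volume (S ∩ cube d)).toReal) ^ (1/p) := by
  have hp0 : (0:ℝ) < p := lt_of_lt_of_le one_pos hp
  have key : (∫ x in cube d, ‖f x‖ ^ p) ≤ c ^ p * (volume (S ∩ cube d)).toReal := by
    have h2 : (∫ x in cube d, S.indicator (fun _ => c ^ p) x) =
        c ^ p * (volume (S ∩ cube d)).toReal := by
      rw [integral_indicator hS, setIntegral_const, Measure.real, Measure.restrict_apply hS, smul_eq_mul, mul_comm]
    rw [← h2]
    refine integral_mono_of_nonneg
      (Filter.Eventually.of_forall fun x => Real.rpow_nonneg (norm_nonneg _) p)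
      ?_ (Filter.Eventually.of_forall fun x => ?_)
    · rw [integrable_indicator_iff hS]
      refine integrableOn_const (ne_of_lt ?_)
      rw [Measure.restrict_apply hS]
      calc volume (S ∩ cube d) ≤ volume (cube d) := measure_mono Set.inter_subset_right
        _ = 1 := cube_vol d
        _ < ⊤ := ENNReal.one_lt_top
    · show ‖f x‖ ^ p ≤ S.indicator (fun _ => c ^ p) x
      by_cases hxS : x ∈ S
      · rw [Set.indicator_of_mem hxS]
        exact Real.rpow_le_rpow (norm_nonneg _) (hb x) hp0.le
      · rw [Set.indicator_of_notMem hxS, hz x hxS, norm_zero, Real.zero_rpow (ne_of_gt hp0)]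
  rw [_root_.lpNorm]
  calc (∫ x in cube d, ‖f x‖ ^ p) ^ (1/p)
      ≤ (c ^ p * (volume (S ∩ cube d)).toReal) ^ (1/p) :=
        Real.rpow_le_rpow (integral_nonneg fun x => Real.rpow_nonneg (norm_nonneg _) p) key
          (by positivity)
    _ = c * (volume (S ∩ cube d)).toReal ^ (1/p) := by
        rw [Real.mul_rpow (Real.rpow_nonneg hc p) ENNReal.toReal_nonneg,
          ← Real.rpow_mul hc, mul_one_div, div_self (ne_of_gt hp0), Real.rpow_one]

/-! ### Time side -/

lemma perKShift_eq (G : ℝ → ℝ) (hG' : ∀ s, G s ≠ 0 → 0 < s ∧ s < 1)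
    {κ : ℝ} (hκ : 1 ≤ κ) (d : ℕ) (k : Fin d) (s : ℝ) :
    perKShift G κ d k s = G (κ * (s - (k.val:ℝ)/(d:ℝ) - (⌊s - (k.val:ℝ)/(d:ℝ)⌋ : ℝ))) := by
  have hκ0 : (0:ℝ) < κ := lt_of_lt_of_le one_pos hκ
  simp only [perKShift]
  refine tsum_eq_single _ fun m hm => ?_
  by_contra h0
  obtain ⟨hs0, hs1⟩ := hG' _ h0
  have h1 : 0 < s - (k.val:ℝ)/(d:ℝ) - (m:ℝ) := by
    by_contra h
    push_neg at h
    nlinarith [mul_nonneg hκ0.le (neg_nonneg.2 h)]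
  have h2 : s - (k.val:ℝ)/(d:ℝ) - (m:ℝ) < 1 := by
    nlinarith [mul_le_mul_of_nonneg_right hκ h1.le]
  exact hm (Int.floor_eq_iff.2 ⟨by linarith, by push_cast; linarith⟩).symm

lemma gBigK_bound (G : ℝ → ℝ) {MG : ℝ} (hMG : ∀ s, |G s| ≤ MG)
    (hG' : ∀ s, G s ≠ 0 → 0 < s ∧ s < 1)
    {κ : ℝ} (hκ : 1 ≤ κ) (α : ℝ) (σ : ℕ) {d : ℕ} (k : Fin d) (t : ℝ) :
    |gBigK G κ α σ k t| ≤ κ^(1-α) * MG * (timeSet κ σ d k).indicator (fun _ => (1:ℝ)) t := by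
  have hκ0 : (0:ℝ) < κ := lt_of_lt_of_le one_pos hκ
  by_cases ht : t ∈ timeSet κ σ d k
  · rw [Set.indicator_of_mem ht, mul_one]
    simp only [gBigK]
    rw [abs_mul, abs_of_nonneg (Real.rpow_nonneg hκ0.le _)]
    refine mul_le_mul_of_nonneg_left ?_ (Real.rpow_nonneg hκ0.le _)
    rw [perKShift_eq G hG' hκ]
    exact hMG _
  · rw [Set.indicator_of_notMem ht, mul_zero]
    have hz : perKShift G κ d k ((σ:ℝ)*t) = 0 := by
      rw [perKShift_eq G hG' hκ]
      by_contra h0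
      obtain ⟨hs0, hs1⟩ := hG' _ h0
      set u : ℝ := (σ:ℝ)*t - (k.val:ℝ)/(d:ℝ) with hu
      refine ht ⟨⌊u⌋, Set.mem_Icc.2 ⟨?_, ?_⟩⟩
      · exact sub_nonneg.2 (Int.floor_le u)
      · have h1 : 0 < u - (⌊u⌋:ℝ) := by
          by_contra h
          push_neg at h
          nlinarith [mul_nonneg hκ0.le (neg_nonneg.2 h)]
        have h2 : κ * (u - (⌊u⌋:ℝ)) < κ * κ⁻¹ := by
          rw [mul_inv_cancel₀ (ne_of_gt hκ0)]
          exact hs1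
        have := (mul_lt_mul_iff_right₀ hκ0).1 h2
        linarith
    simp only [gBigK]
    rw [hz, mul_zero, abs_zero]

end AuxVelocity

set_option maxHeartbeats 2000000 in
/-- the `L^1_t W^{1,p}` estimate on the velocity perturbation
`w(t,x) = ∑_k g_k(t) 𝐖_k(x)` (Lemma 4.3 of the paper). Here `d = n+1`, `n ≥ 1`. -/
theorem velocity_perturbation_estimate (n : ℕ) (hn : 1 ≤ n)
    (G : ℝ → ℝ) (hGs : ContDiff ℝ (⊤ : ℕ∞) G)
    (hGc : HasCompactSupport G) (hGsupp : tsupport G ⊆ Set.Ioo (0:ℝ) 1)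
    (hGnorm : (∫ t : ℝ, (G t)^2) = 1)
    (φ : (Fin n → ℝ) → ℝ) (Ω : (Fin n → ℝ) → (Fin n → ℝ))
    (hφs : ContDiff ℝ (⊤ : ℕ∞) φ) (hφc : HasCompactSupport φ)
    (hΩs : ContDiff ℝ (⊤ : ℕ∞) Ω) (hΩc : HasCompactSupport Ω)
    (hΩsupp : tsupport Ω ⊆ Set.univ.pi fun _ => Set.Ioo (0:ℝ) 1)
    (hdiv : ∀ y, divF Ω y = φ y)
    (hφnorm : (∫ y, (φ y)^2) = 1)
    (p : ℝ) (hp : 1 ≤ p) :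
    ∃ C : ℝ, 0 < C ∧
      ∀ μ : ℝ, 1 ≤ μ → ∀ σ : ℕ, 1 ≤ σ → ∀ κ : ℝ, ((n : ℝ) + 1) ≤ κ →
      ∀ α : ℝ, 0 < α → α < 1 →
        (∫ t in Set.Ioo (0:ℝ) 1,
            w1pNorm p (fun x => ∑ k, gBigK G κ α σ k t • MikW φ μ σ k x))
          ≤ C * κ ^ (-α) * ((σ : ℝ) * μ) * μ ^ ((n:ℝ) * (1 - 1/p)) := by
  -- support of G
  have hG' : ∀ s, G s ≠ 0 → 0 < s ∧ s < 1 := by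
    intro s hs
    have hmem := hGsupp (subset_tsupport G hs)
    exact ⟨hmem.1, hmem.2⟩
  -- margin δ for φ
  obtain ⟨δ, hδ0, hsupp⟩ := exists_delta φ Ω hΩc hΩsupp hdiv
  -- sup bounds
  obtain ⟨M₀, hM₀'⟩ := hφc.exists_bound_of_continuous hφs.continuous
  obtain ⟨M₁, hM₁⟩ := (hφc.fderiv ℝ).exists_bound_of_continuous
    (hφs.continuous_fderiv (by simp))
  obtain ⟨MG, hMG'⟩ := hGc.exists_bound_of_continuous hGs.continuous
  have hM₀ : ∀ y, |φ y| ≤ M₀ := fun y => by rw [← Real.norm_eq_abs]; exact hM₀' y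
  have hMG : ∀ s, |G s| ≤ MG := fun s => by rw [← Real.norm_eq_abs]; exact hMG' s
  have hM₀0 : 0 ≤ M₀ := le_trans (norm_nonneg _) (hM₀' 0)
  have hM₁0 : 0 ≤ M₁ := le_trans (norm_nonneg _) (hM₁ 0)
  have hMG0 : 0 ≤ MG := le_trans (norm_nonneg _) (hMG' 0)
  have hp0 : (0:ℝ) < p := lt_of_lt_of_le one_pos hp
  refine ⟨4*((n:ℝ)+1)^2*3^n*MG*(M₀+M₁) + 1, ?_, ?_⟩
  · have h1 : (0:ℝ) ≤ 4*((n:ℝ)+1)^2*3^n := by positivity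
    have h2 : (0:ℝ) ≤ M₀ + M₁ := by linarith
    nlinarith [mul_nonneg (mul_nonneg h1 hMG0) h2]
  intro μ hμ σ hσ κ hκ α hα0 hα1
  have hμ0 : (0:ℝ) < μ := lt_of_lt_of_le one_pos hμ
  have hσ0 : (0:ℝ) < (σ:ℝ) := by exact_mod_cast hσ
  have hσ1R : (1:ℝ) ≤ (σ:ℝ) := by exact_mod_cast hσ
  have hn1R : (1:ℝ) ≤ (n:ℝ) := by exact_mod_cast hn
  have hκ1 : (1:ℝ) ≤ κ := by linarith
  have hκ0 : (0:ℝ) < κ := lt_of_lt_of_le one_pos hκ1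
  have hσμ1 : (1:ℝ) ≤ (σ:ℝ)*μ := by nlinarith
  -- spatial measure
  set V : ℝ := (volume (bigS n μ σ ∩ cube (n+1))).toReal with hVdef
  have hV0 : 0 ≤ V := ENNReal.toReal_nonneg
  have hVle : V ≤ ((n:ℝ)+1) * (3/μ)^n :=
    ENNReal.toReal_le_of_le_ofReal (by positivity) (bigS_vol hμ hσ)
  set Ksp : ℝ := (μ^n * M₀ + μ^n * (μ * (σ:ℝ) * M₁)) * V ^ (1/p) with hKspdef
  have hKsp0 : 0 ≤ Ksp := by
    rw [hKspdef]
    have h1 : 0 ≤ μ^n * M₀ := mul_nonneg (pow_nonneg hμ0.le n) hM₀0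
    have h2 : 0 ≤ μ^n * (μ * (σ:ℝ) * M₁) :=
      mul_nonneg (pow_nonneg hμ0.le n) (by positivity)
    exact mul_nonneg (by linarith) (Real.rpow_nonneg hV0 _)
  -- Step 1: pointwise-in-time W^{1,p} bound
  have hW : ∀ t : ℝ, w1pNorm p (fun x => ∑ k, gBigK G κ α σ k t • MikW φ μ σ k x) ≤
      (∑ k : Fin (n+1), |gBigK G κ α σ k t|) * Ksp := by
    intro t
    have hA0 : 0 ≤ ∑ k : Fin (n+1), |gBigK G κ α σ k t| :=
      Finset.sum_nonneg fun k _ => abs_nonneg _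
    have hb1 : ∀ x, ‖∑ k, gBigK G κ α σ k t • MikW φ μ σ k x‖ ≤
        (∑ k : Fin (n+1), |gBigK G κ α σ k t|) * (μ^n * M₀) := by
      intro x
      calc ‖∑ k, gBigK G κ α σ k t • MikW φ μ σ k x‖
          ≤ ∑ k, ‖gBigK G κ α σ k t • MikW φ μ σ k x‖ := norm_sum_le _ _
        _ ≤ ∑ k : Fin (n+1), |gBigK G κ α σ k t| * (μ^n * M₀) := by
            refine Finset.sum_le_sum fun k _ => ?_
            rw [norm_smul, Real.norm_eq_abs]
            refine mul_le_mul_of_nonneg_left ?_ (abs_nonneg _)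
            calc ‖MikW φ μ σ k x‖
                = |μ^n * MikPhi φ μ σ k x| * ‖(Pi.single k 1 : Fin (n+1) → ℝ)‖ := by
                  simp only [MikW]
                  rw [norm_smul, Real.norm_eq_abs]
              _ ≤ (μ^n * M₀) * 1 := by
                  refine mul_le_mul ?_ (norm_single_le n k) (norm_nonneg _)
                    (mul_nonneg (pow_nonneg hμ0.le n) hM₀0)
                  rw [abs_mul, abs_of_nonneg (pow_nonneg hμ0.le n)]
                  exact mul_le_mul_of_nonneg_left
                    (mikPhi_abs_le hn φ hδ0 hsupp hμ hσ hM₀ k x) (pow_nonneg hμ0.le n)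
              _ = μ^n * M₀ := mul_one _
        _ = (∑ k : Fin (n+1), |gBigK G κ α σ k t|) * (μ^n * M₀) := (Finset.sum_mul _ _ _).symm
    have hz1 : ∀ x, x ∉ bigS n μ σ → (∑ k, gBigK G κ α σ k t • MikW φ μ σ k x) = 0 :=
      fun x hx => (sum_vanish hn φ hδ0 hsupp hμ hσ (fun k => gBigK G κ α σ k t) hx).1
    have hb2 : ∀ x, ‖fderiv ℝ (fun y => ∑ k, gBigK G κ α σ k t • MikW φ μ σ k y) x‖ ≤
        (∑ k : Fin (n+1), |gBigK G κ α σ k t|) * (μ^n * (μ * (σ:ℝ) * M₁)) :=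
      fun x => sum_fderiv_bound hn hφs hδ0 hsupp hμ hσ hM₁ (fun k => gBigK G κ α σ k t) x
    have hz2 : ∀ x, x ∉ bigS n μ σ →
        fderiv ℝ (fun y => ∑ k, gBigK G κ α σ k t • MikW φ μ σ k y) x = 0 :=
      fun x hx => (sum_vanish hn φ hδ0 hsupp hμ hσ (fun k => gBigK G κ α σ k t) hx).2
    have h1 := aux_lp_bound hp (fun x => ∑ k, gBigK G κ α σ k t • MikW φ μ σ k x)
      (bigS_meas n μ σ)
      (mul_nonneg hA0 (mul_nonneg (pow_nonneg hμ0.le n) hM₀0)) hb1 hz1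
    have h2 := aux_lp_bound hp
      (fun x => fderiv ℝ (fun y => ∑ k, gBigK G κ α σ k t • MikW φ μ σ k y) x)
      (bigS_meas n μ σ)
      (mul_nonneg hA0 (mul_nonneg (pow_nonneg hμ0.le n) (by positivity))) hb2 hz2
    rw [← hVdef] at h1 h2
    simp only [w1pNorm]
    calc lpNorm p (fun x => ∑ k, gBigK G κ α σ k t • MikW φ μ σ k x) +
          lpNorm p (fun x => fderiv ℝ (fun x => ∑ k, gBigK G κ α σ k t • MikW φ μ σ k x) x)
        ≤ (∑ k : Fin (n+1), |gBigK G κ α σ k t|) * (μ^n * M₀) * V ^ (1/p) +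
          (∑ k : Fin (n+1), |gBigK G κ α σ k t|) * (μ^n * (μ * (σ:ℝ) * M₁)) * V ^ (1/p) :=
          add_le_add h1 h2
      _ = (∑ k : Fin (n+1), |gBigK G κ α σ k t|) * Ksp := by rw [hKspdef]; ring
  -- Step 2: integrate in time
  have hioo : volume (Set.Ioo (0:ℝ) 1) < ⊤ := by
    rw [Real.volume_Ioo]; exact ENNReal.ofReal_lt_top
  have hind : ∀ k : Fin (n+1), Integrable
      ((timeSet κ σ (n+1) k).indicator (fun _ => (1:ℝ))) (volume.restrict (Set.Ioo (0:ℝ) 1)) := by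
    intro k
    rw [integrable_indicator_iff (timeSet_meas κ σ (n+1) k)]
    refine integrableOn_const (ne_of_lt ?_)
    rw [Measure.restrict_apply (timeSet_meas κ σ (n+1) k)]
    exact lt_of_le_of_lt (measure_mono Set.inter_subset_right) hioo
  have hindc : ∀ k : Fin (n+1), Integrable
      (fun t => (κ^(1-α) * MG * Ksp) * (timeSet κ σ (n+1) k).indicator (fun _ => (1:ℝ)) t)
      (volume.restrict (Set.Ioo (0:ℝ) 1)) := fun k => (hind k).const_mul _
  have hDint : Integrable (fun t => ∑ k : Fin (n+1),
      (κ^(1-α) * MG * Ksp) * (timeSet κ σ (n+1) k).indicator (fun _ => (1:ℝ)) t)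
      (volume.restrict (Set.Ioo (0:ℝ) 1)) := integrable_finset_sum _ fun k _ => hindc k
  have hmono : (∫ t in Set.Ioo (0:ℝ) 1,
        w1pNorm p (fun x => ∑ k, gBigK G κ α σ k t • MikW φ μ σ k x)) ≤
      ∫ t in Set.Ioo (0:ℝ) 1, ∑ k : Fin (n+1),
        (κ^(1-α) * MG * Ksp) * (timeSet κ σ (n+1) k).indicator (fun _ => (1:ℝ)) t := by
    refine integral_mono_of_nonneg (Filter.Eventually.of_forall fun t => ?_) hDint
      (Filter.Eventually.of_forall fun t => ?_)
    · show 0 ≤ w1pNorm p _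
      simp only [w1pNorm]
      exact add_nonneg (lpNorm_nonneg _ _) (lpNorm_nonneg _ _)
    · show w1pNorm p _ ≤ _
      calc w1pNorm p (fun x => ∑ k, gBigK G κ α σ k t • MikW φ μ σ k x)
          ≤ (∑ k : Fin (n+1), |gBigK G κ α σ k t|) * Ksp := hW t
        _ ≤ (∑ k : Fin (n+1), κ^(1-α) * MG *
              (timeSet κ σ (n+1) k).indicator (fun _ => (1:ℝ)) t) * Ksp := by
            refine mul_le_mul_of_nonneg_right ?_ hKsp0
            exact Finset.sum_le_sum fun k _ => gBigK_bound G hMG hG' hκ1 α σ k t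
        _ = ∑ k : Fin (n+1), (κ^(1-α) * MG * Ksp) *
              (timeSet κ σ (n+1) k).indicator (fun _ => (1:ℝ)) t := by
            rw [Finset.sum_mul]
            exact Finset.sum_congr rfl fun k _ => by ring
  have hDval : (∫ t in Set.Ioo (0:ℝ) 1, ∑ k : Fin (n+1),
        (κ^(1-α) * MG * Ksp) * (timeSet κ σ (n+1) k).indicator (fun _ => (1:ℝ)) t)
      = ∑ k : Fin (n+1), (κ^(1-α) * MG * Ksp) *
          (volume (timeSet κ σ (n+1) k ∩ Set.Ioo (0:ℝ) 1)).toReal := by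
    rw [integral_finset_sum _ fun k _ => hindc k]
    refine Finset.sum_congr rfl fun k _ => ?_
    rw [integral_const_mul, integral_indicator (timeSet_meas κ σ (n+1) k), setIntegral_const,
      Measure.real, Measure.restrict_apply (timeSet_meas κ σ (n+1) k), smul_eq_mul, mul_one]
  have htime : ∀ k : Fin (n+1),
      (volume (timeSet κ σ (n+1) k ∩ Set.Ioo (0:ℝ) 1)).toReal ≤ 4/κ := fun k =>
    ENNReal.toReal_le_of_le_ofReal (div_nonneg (by norm_num) hκ0.le) (timeSet_vol hκ1 hσ k)
  have hc0 : 0 ≤ κ^(1-α) * MG * Ksp :=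
    mul_nonneg (mul_nonneg (Real.rpow_nonneg hκ0.le _) hMG0) hKsp0
  have hInt : (∫ t in Set.Ioo (0:ℝ) 1,
        w1pNorm p (fun x => ∑ k, gBigK G κ α σ k t • MikW φ μ σ k x)) ≤
      ((n:ℝ)+1) * ((κ^(1-α) * MG * Ksp) * (4/κ)) := by
    calc (∫ t in Set.Ioo (0:ℝ) 1,
          w1pNorm p (fun x => ∑ k, gBigK G κ α σ k t • MikW φ μ σ k x))
        ≤ ∑ k : Fin (n+1), (κ^(1-α) * MG * Ksp) *
            (volume (timeSet κ σ (n+1) k ∩ Set.Ioo (0:ℝ) 1)).toReal := by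
          rw [← hDval]; exact hmono
      _ ≤ ∑ _k : Fin (n+1), (κ^(1-α) * MG * Ksp) * (4/κ) :=
          Finset.sum_le_sum fun k _ => mul_le_mul_of_nonneg_left (htime k) hc0
      _ = ((n:ℝ)+1) * ((κ^(1-α) * MG * Ksp) * (4/κ)) := by
          rw [Finset.sum_const, Finset.card_univ, Fintype.card_fin, nsmul_eq_mul]
          push_cast
          ring
  -- Step 3: arithmetic
  have hVp : V ^ (1/p) ≤ (((n:ℝ)+1)*3^n) * μ ^ (-(n:ℝ)*(1/p)) := by
    have h1 : V ^ (1/p) ≤ (((n:ℝ)+1) * (3/μ)^n) ^ (1/p) :=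
      Real.rpow_le_rpow hV0 hVle (by positivity)
    have h2 : ((n:ℝ)+1) * (3/μ)^n = (((n:ℝ)+1)*3^n) * (μ^n)⁻¹ := by
      rw [div_pow, div_eq_mul_inv]; ring
    have h3 : ((((n:ℝ)+1)*3^n) * (μ^n)⁻¹) ^ (1/p) =
        (((n:ℝ)+1)*3^n) ^ (1/p) * ((μ^n)⁻¹) ^ (1/p) :=
      Real.mul_rpow (by positivity) (by positivity)
    have h4 : ((((n:ℝ)+1))*3^n) ^ (1/p) ≤ ((n:ℝ)+1)*3^n := by
      have hB1 : (1:ℝ) ≤ ((n:ℝ)+1)*3^n := by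
        have h31 : (1:ℝ) ≤ 3^n := one_le_pow₀ (by norm_num)
        nlinarith
      calc ((((n:ℝ)+1))*3^n) ^ (1/p) ≤ ((((n:ℝ)+1))*3^n) ^ (1:ℝ) :=
            Real.rpow_le_rpow_of_exponent_le hB1 (by rw [div_le_one hp0]; exact hp)
        _ = ((n:ℝ)+1)*3^n := Real.rpow_one _
    have h5 : ((μ^n)⁻¹) ^ (1/p) = μ ^ (-(n:ℝ)*(1/p)) := by
      rw [← Real.rpow_natCast μ n, ← Real.rpow_neg hμ0.le, ← Real.rpow_mul hμ0.le]
    calc V ^ (1/p) ≤ (((n:ℝ)+1) * (3/μ)^n) ^ (1/p) := h1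
      _ = (((n:ℝ)+1)*3^n) ^ (1/p) * ((μ^n)⁻¹) ^ (1/p) := by rw [h2, h3]
      _ ≤ (((n:ℝ)+1)*3^n) * μ ^ (-(n:ℝ)*(1/p)) := by
          rw [h5]
          exact mul_le_mul_of_nonneg_right h4 (Real.rpow_nonneg hμ0.le _)
  have hμpow : μ^n * μ ^ (-(n:ℝ)*(1/p)) = μ ^ ((n:ℝ)*(1-1/p)) := by
    rw [← Real.rpow_natCast μ n, ← Real.rpow_add hμ0]
    congr 1
    ring
  have hK1 : μ^n * M₀ + μ^n * (μ * (σ:ℝ) * M₁) ≤ ((σ:ℝ)*μ) * (M₀+M₁) * μ^n := by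
    nlinarith [mul_nonneg (mul_nonneg hM₀0 (pow_nonneg hμ0.le n)) (sub_nonneg.2 hσμ1),
      mul_nonneg (mul_nonneg hM₁0 (pow_nonneg hμ0.le n)) (by positivity : (0:ℝ) ≤ (σ:ℝ)*μ)]
  have hKsple : Ksp ≤ ((σ:ℝ)*μ) * ((M₀+M₁) * (((n:ℝ)+1)*3^n)) * μ ^ ((n:ℝ)*(1-1/p)) := by
    calc Ksp = (μ^n * M₀ + μ^n * (μ * (σ:ℝ) * M₁)) * V ^ (1/p) := hKspdef
      _ ≤ (((σ:ℝ)*μ) * (M₀+M₁) * μ^n) * ((((n:ℝ)+1)*3^n) * μ ^ (-(n:ℝ)*(1/p))) := by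
          refine mul_le_mul hK1 hVp (Real.rpow_nonneg hV0 _) ?_
          have : (0:ℝ) ≤ M₀ + M₁ := by linarith
          positivity
      _ = ((σ:ℝ)*μ) * ((M₀+M₁) * (((n:ℝ)+1)*3^n)) * (μ^n * μ ^ (-(n:ℝ)*(1/p))) := by ring
      _ = ((σ:ℝ)*μ) * ((M₀+M₁) * (((n:ℝ)+1)*3^n)) * μ ^ ((n:ℝ)*(1-1/p)) := by rw [hμpow]
  have hκpow : κ^(1-α) * (4/κ) = 4 * κ^(-α) := by
    have h1 : κ⁻¹ = κ^(-1:ℝ) := (Real.rpow_neg_one κ).symm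
    calc κ^(1-α) * (4/κ) = 4 * (κ^(1-α) * κ^(-1:ℝ)) := by
          rw [← h1]; ring
      _ = 4 * κ^(1-α + -1) := by rw [Real.rpow_add hκ0]
      _ = 4 * κ^(-α) := by
          congr 1
          ring
  have hX0 : (0:ℝ) ≤ κ^(-α) * ((σ:ℝ)*μ) * μ ^ ((n:ℝ)*(1-1/p)) := by
    have h1 : (0:ℝ) ≤ κ^(-α) := Real.rpow_nonneg hκ0.le _
    have h2 : (0:ℝ) ≤ μ ^ ((n:ℝ)*(1-1/p)) := Real.rpow_nonneg hμ0.le _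
    positivity
  calc (∫ t in Set.Ioo (0:ℝ) 1,
        w1pNorm p (fun x => ∑ k, gBigK G κ α σ k t • MikW φ μ σ k x))
      ≤ ((n:ℝ)+1) * ((κ^(1-α) * MG * Ksp) * (4/κ)) := hInt
    _ = (((n:ℝ)+1) * MG * Ksp) * (κ^(1-α) * (4/κ)) := by ring
    _ = (((n:ℝ)+1) * MG * Ksp) * (4 * κ^(-α)) := by rw [hκpow]
    _ = (4*((n:ℝ)+1)*MG*κ^(-α)) * Ksp := by ring
    _ ≤ (4*((n:ℝ)+1)*MG*κ^(-α)) *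
          (((σ:ℝ)*μ) * ((M₀+M₁) * (((n:ℝ)+1)*3^n)) * μ ^ ((n:ℝ)*(1-1/p))) := by
        refine mul_le_mul_of_nonneg_left hKsple ?_
        have h1 : (0:ℝ) ≤ κ^(-α) := Real.rpow_nonneg hκ0.le _
        positivity
    _ = (4*((n:ℝ)+1)^2*3^n*MG*(M₀+M₁)) * κ^(-α) * ((σ:ℝ)*μ) * μ ^ ((n:ℝ)*(1-1/p)) := by ring
    _ ≤ (4*((n:ℝ)+1)^2*3^n*MG*(M₀+M₁) + 1) * κ^(-α) * ((σ:ℝ)*μ) * μ ^ ((n:ℝ)*(1-1/p)) := by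
        nlinarith [hX0]
end

section
/- Let d ≥ 2, let φ, Ω be Mikado profiles and 𝚽_k the rescaled Mikado densities with parameters μ ≥ 1 and σ ∈ ℕ, σ ≥ 1, and let g̃_k be the shifted temporally intermittent functions with parameters κ ≥ d and α ∈ (0,1). Let R : [0,1]×𝕋^d → ℝ^d be smooth with components R_1,…,R_d, and define the principal density perturbation θ_p(t,x) = − Σ_{k=1}^d g̃_k(t) R_k(t,x) 𝚽_k(x). Then for every integer p ≥ 1 there is a constant C, depending only on d, p, G̃, and φ (and independent of σ, μ, κ, α, and R), such that ( ∫_0^1 ‖θ_p(t,·)‖_{C^p(𝕋^d)}^p dt )^{1/p} ≤ C ( max_k sup_t ‖R_k(t,·)‖_{C^p(𝕋^d)} ) (σμ)^p κ^{α − 1/p}. -/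
open MeasureTheory Filter Topology Set
open scoped ENNReal NNReal BigOperators

section DPEHelpers

open MeasureTheory Filter Topology Set
open scoped ENNReal NNReal BigOperators

noncomputable section

variable {E F : Type*} [NormedAddCommGroup E] [NormedSpace ℝ E]
  [NormedAddCommGroup F] [NormedSpace ℝ F]

theorem my_fderiv_comp_add (g : E → F) (c x : E) :
    fderiv ℝ (fun y => g (y + c)) x = fderiv ℝ g (x + c) := by
  by_cases h : DifferentiableAt ℝ g (x + c)
  · have h1 : HasFDerivAt (fun y : E => y + c) (ContinuousLinearMap.id ℝ E) x := by
      simpa using (hasFDerivAt_id x).add_const c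
    have := (h.hasFDerivAt.comp x h1).fderiv
    simpa [Function.comp_def] using this
  · rw [fderiv_zero_of_not_differentiableAt h, fderiv_zero_of_not_differentiableAt]
    intro hd
    apply h
    have key : DifferentiableAt ℝ ((fun z : E => g (z + c)) ∘ fun y : E => y - c) (x + c) := by
      apply DifferentiableAt.comp
      · simpa using hd
      · exact differentiableAt_id.sub_const c
    have heq : ((fun z : E => g (z + c)) ∘ fun y : E => y - c) = g := by
      funext y; simp [Function.comp]
    rwa [heq] at key

theorem my_iteratedFDeriv_comp_add (g : E → F) (c : E) (i : ℕ) :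
    (fun x => iteratedFDeriv ℝ i (fun y => g (y + c)) x)
      = fun x => iteratedFDeriv ℝ i g (x + c) := by
  induction i with
  | zero => funext x; ext m; simp
  | succ i IH =>
    funext x
    rw [iteratedFDeriv_succ_eq_comp_left, iteratedFDeriv_succ_eq_comp_left]
    simp only [Function.comp_apply]
    congr 1
    have IH' : (iteratedFDeriv ℝ i fun y => g (y + c))
        = fun y => iteratedFDeriv ℝ i g (y + c) := IH
    rw [IH', my_fderiv_comp_add (iteratedFDeriv ℝ i g) c x]

theorem my_iteratedFDeriv_periodic (g : E → F) (c : E) (hg : ∀ y, g (y + c) = g y)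
    (i : ℕ) (x : E) : iteratedFDeriv ℝ i g (x + c) = iteratedFDeriv ℝ i g x := by
  have := congrFun (my_iteratedFDeriv_comp_add g c i) x
  rw [← this]
  congr 1
  funext y; exact hg y

theorem my_iteratedFDeriv_congr_nhds {f₁ f : E → F} {x : E} (h : f₁ =ᶠ[nhds x] f) (i : ℕ) :
    iteratedFDeriv ℝ i f₁ x = iteratedFDeriv ℝ i f x := by
  simp only [← iteratedFDerivWithin_univ]
  apply Filter.EventuallyEq.iteratedFDerivWithin_eq
  · rwa [nhdsWithin_univ]
  · exact h.eq_of_nhds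

theorem my_bdd_per {d : ℕ} (f : (Fin d → ℝ) → E) (hf : ContDiff ℝ (⊤:ℕ∞) f)
    (hper : ZPer f) (i : ℕ) :
    BddAbove (Set.range fun x => ‖iteratedFDeriv ℝ i f x‖) := by
  have hcont : Continuous fun x => ‖iteratedFDeriv ℝ i f x‖ :=
    (hf.continuous_iteratedFDeriv (by exact_mod_cast le_top)).norm
  have hK : IsCompact (Set.Icc (0 : Fin d → ℝ) 1) := isCompact_Icc
  have hbdd : BddAbove ((fun x => ‖iteratedFDeriv ℝ i f x‖) '' Set.Icc 0 1) :=
    (hK.image hcont).bddAbove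
  refine hbdd.mono ?_
  rintro - ⟨x, rfl⟩
  refine ⟨fun j => Int.fract (x j), ?_, ?_⟩
  · constructor
    · intro j; exact Int.fract_nonneg _
    · intro j; exact (Int.fract_lt_one _).le
  · have hx : x = (fun j => Int.fract (x j)) + fun j => ((⌊x j⌋ : ℤ) : ℝ) := by
      funext j; exact (Int.fract_add_floor (x j)).symm
    have hper' := my_iteratedFDeriv_periodic f (fun j => ((⌊x j⌋ : ℤ) : ℝ))
      (fun y => hper y fun j => ⌊x j⌋) i (fun j => Int.fract (x j))
    show ‖iteratedFDeriv ℝ i f (fun j => Int.fract (x j))‖ = ‖iteratedFDeriv ℝ i f x‖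
    conv_rhs => rw [hx]
    rw [hper']

theorem my_norm_iFD_le_ckNorm {d : ℕ} (f : (Fin d → ℝ) → E) (hf : ContDiff ℝ (⊤:ℕ∞) f)
    (hper : ZPer f) {i k : ℕ} (hik : i ≤ k) (x : Fin d → ℝ) :
    ‖iteratedFDeriv ℝ i f x‖ ≤ ckNorm k f := by
  have h1 : ‖iteratedFDeriv ℝ i f x‖ ≤ ⨆ y : Fin d → ℝ, ‖iteratedFDeriv ℝ i f y‖ :=
    le_ciSup (my_bdd_per f hf hper i) x
  refine h1.trans ?_
  exact Finset.single_le_sum (f := fun j => ⨆ y : Fin d → ℝ, ‖iteratedFDeriv ℝ j f y‖)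
    (fun j _ => Real.iSup_nonneg fun y => norm_nonneg _)
    (Finset.mem_range.2 (Nat.lt_succ_of_le hik))

theorem my_ckNorm_nonneg {d : ℕ} (k : ℕ) (f : (Fin d → ℝ) → E) : 0 ≤ ckNorm k f :=
  Finset.sum_nonneg fun _j _ => Real.iSup_nonneg fun _y => norm_nonneg _

theorem my_ckNorm_le_of_bound {d : ℕ} (k : ℕ) (f : (Fin d → ℝ) → E) (D : ℝ)
    (h : ∀ i ≤ k, ∀ x, ‖iteratedFDeriv ℝ i f x‖ ≤ D) : ckNorm k f ≤ (k+1) * D := by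
  have hstep : ∀ i ∈ Finset.range (k+1), (⨆ x : Fin d → ℝ, ‖iteratedFDeriv ℝ i f x‖) ≤ D := by
    intro i hi
    exact ciSup_le (h i (Nat.lt_succ_iff.1 (Finset.mem_range.1 hi)))
  calc ckNorm k f ≤ ∑ _i ∈ Finset.range (k+1), D := Finset.sum_le_sum hstep
    _ = (k+1) * D := by simp [Finset.sum_const, mul_comm]

theorem my_slice_iFD_le {d : ℕ} (F : ℝ × (Fin d → ℝ) → E) (hF : ContDiff ℝ (⊤:ℕ∞) F)
    (i : ℕ) (t : ℝ) (x : Fin d → ℝ) :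
    ‖iteratedFDeriv ℝ i (fun y => F (t, y)) x‖ ≤ ‖iteratedFDeriv ℝ i F (t, x)‖ := by
  set L := ContinuousLinearMap.inr ℝ ℝ (Fin d → ℝ) with hLdef
  have hG : ContDiff ℝ (⊤:ℕ∞) (fun z : ℝ × (Fin d → ℝ) => F (z + ((t : ℝ), (0 : Fin d → ℝ)))) :=
    hF.comp (contDiff_id.add contDiff_const)
  have hcomp : (fun y => F (t, y))
      = (fun z : ℝ × (Fin d → ℝ) => F (z + ((t : ℝ), (0 : Fin d → ℝ)))) ∘ L := by
    funext y
    simp [hLdef, Prod.ext_iff]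
  rw [hcomp, ContinuousLinearMap.iteratedFDeriv_comp_right L hG x (by exact_mod_cast le_top)]
  have htrans := congrFun (my_iteratedFDeriv_comp_add F ((t : ℝ), (0 : Fin d → ℝ)) i) (L x)
  rw [htrans]
  have hpt : (L x) + ((t : ℝ), (0 : Fin d → ℝ)) = (t, x) := by
    simp [hLdef, Prod.ext_iff]
  rw [hpt]
  refine (ContinuousMultilinearMap.norm_compContinuousLinearMap_le _ _).trans ?_
  have hL : ‖L‖ ≤ 1 := by
    refine ContinuousLinearMap.opNorm_le_bound _ zero_le_one ?_
    intro y
    simp [hLdef, Prod.norm_def]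
  calc ‖iteratedFDeriv ℝ i F (t, x)‖ * ∏ _j : Fin i, ‖L‖
      ≤ ‖iteratedFDeriv ℝ i F (t, x)‖ * ∏ _j : Fin i, (1:ℝ) := by
        apply mul_le_mul_of_nonneg_left _ (norm_nonneg _)
        exact Finset.prod_le_prod (fun _ _ => norm_nonneg _) (fun _ _ => hL)
    _ = ‖iteratedFDeriv ℝ i F (t, x)‖ := by simp

theorem my_toNat_cast_le {a : ℤ} {b : ℝ} (hb : 0 ≤ b) (h : (a : ℝ) ≤ b) :
    ((a.toNat : ℝ)) ≤ b := by
  rcases le_or_gt 0 a with ha | ha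
  · calc ((a.toNat : ℝ)) = ((a.toNat : ℤ) : ℝ) := by push_cast; ring
      _ = (a : ℝ) := by rw [Int.toNat_of_nonneg ha]
      _ ≤ b := h
  · simp [Int.toNat_of_nonpos ha.le, hb]

theorem my_slice_facts {d : ℕ} (R : ℝ → (Fin d → ℝ) → (Fin d → ℝ)) (hR : SmoothPer d R)
    (k : Fin d) (t : ℝ) :
    ContDiff ℝ (⊤:ℕ∞) (fun x => R t x k) ∧ ZPer (fun x => R t x k) := by
  constructor
  · have h1 : ContDiff ℝ (⊤:ℕ∞) (fun q : ℝ × (Fin d → ℝ) => R q.1 q.2 k) :=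
      (ContinuousLinearMap.proj (R := ℝ) (φ := fun _ : Fin d => ℝ) k).contDiff.comp hR.1
    exact h1.comp (contDiff_const.prodMk contDiff_id)
  · intro x m
    exact congrFun (hR.2 t x m) k

theorem my_R_bddAbove {d : ℕ} (R : ℝ → (Fin d → ℝ) → (Fin d → ℝ)) (hR : SmoothPer d R)
    (k : Fin d) (p : ℕ) :
    BddAbove (Set.range fun t : Set.Icc (0:ℝ) 1 => ckNorm p (fun x => R (t:ℝ) x k)) := by
  classical
  set Fk : ℝ × (Fin d → ℝ) → ℝ := fun q => R q.1 q.2 k with hFkdef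
  have hFk : ContDiff ℝ (⊤:ℕ∞) Fk :=
    (ContinuousLinearMap.proj (R := ℝ) (φ := fun _ : Fin d => ℝ) k).contDiff.comp hR.1
  set K : Set (ℝ × (Fin d → ℝ)) := Set.Icc (0:ℝ) 1 ×ˢ Set.Icc (0 : Fin d → ℝ) 1 with hKdef
  have hKc : IsCompact K := isCompact_Icc.prod isCompact_Icc
  set D : ℕ → ℝ := fun i => sSup ((fun q => ‖iteratedFDeriv ℝ i Fk q‖) '' K) with hDdef
  have hDb : ∀ i, ∀ q ∈ K, ‖iteratedFDeriv ℝ i Fk q‖ ≤ D i := by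
    intro i q hq
    apply le_csSup
    · exact (hKc.image (hFk.continuous_iteratedFDeriv
        (by exact_mod_cast le_top)).norm).bddAbove
    · exact Set.mem_image_of_mem _ hq
  set DT : ℝ := ∑ i ∈ Finset.range (p+1), max (D i) 0 with hDTdef
  have hDT : ∀ i ≤ p, ∀ q ∈ K, ‖iteratedFDeriv ℝ i Fk q‖ ≤ DT := by
    intro i hip q hq
    refine ((hDb i q hq).trans (le_max_left (D i) 0)).trans ?_
    exact Finset.single_le_sum (f := fun i => max (D i) 0)
      (fun j _ => le_max_right _ _) (Finset.mem_range.2 (Nat.lt_succ_of_le hip))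
  have hslice : ∀ t ∈ Set.Icc (0:ℝ) 1, ∀ i ≤ p, ∀ x : Fin d → ℝ,
      ‖iteratedFDeriv ℝ i (fun y => R t y k) x‖ ≤ DT := by
    intro t ht i hip x
    have h1 : ‖iteratedFDeriv ℝ i (fun y => R t y k) x‖ ≤ ‖iteratedFDeriv ℝ i Fk (t, x)‖ :=
      my_slice_iFD_le Fk hFk i t x
    refine h1.trans ?_
    set x' : Fin d → ℝ := fun j => Int.fract (x j) with hx'def
    have hper2 : ∀ z : ℝ × (Fin d → ℝ),
        Fk (z + ((0:ℝ), fun j => ((⌊x j⌋ : ℤ) : ℝ))) = Fk z := by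
      intro z
      show R (z.1 + 0) (z.2 + fun j => ((⌊x j⌋ : ℤ) : ℝ)) k = R z.1 z.2 k
      rw [add_zero]
      exact congrFun (hR.2 z.1 z.2 fun j => ⌊x j⌋) k
    have hxsplit : (t, x) = ((t, x') + ((0:ℝ), fun j => ((⌊x j⌋ : ℤ) : ℝ))) := by
      apply Prod.ext
      · simp
      · show x = x' + fun j => ((⌊x j⌋ : ℤ) : ℝ)
        funext j
        exact (Int.fract_add_floor (x j)).symm
    rw [hxsplit, my_iteratedFDeriv_periodic Fk _ hper2 i (t, x')]
    apply hDT i hip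
    constructor
    · exact ht
    · constructor
      · intro j; exact Int.fract_nonneg _
      · intro j; exact (Int.fract_lt_one _).le
  refine ⟨((p:ℝ)+1) * DT, ?_⟩
  rw [mem_upperBounds]
  rintro y ⟨t, rfl⟩
  exact my_ckNorm_le_of_bound p _ DT (fun i hip x => hslice (t:ℝ) t.2 i hip x)

theorem mikPhi_props {n : ℕ} (φ : (Fin n → ℝ) → ℝ) (hφs : ContDiff ℝ (⊤:ℕ∞) φ)
    (hφc : HasCompactSupport φ) (p : ℕ) :
    ∃ Cφ : ℝ, 0 ≤ Cφ ∧ ∀ (μ : ℝ), 1 ≤ μ → ∀ (σ : ℕ), 1 ≤ σ → ∀ k : Fin (n+1),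
      ContDiff ℝ (⊤:ℕ∞) (MikPhi φ μ σ k) ∧
      ∀ i ≤ p, ∀ x, ‖iteratedFDeriv ℝ i (MikPhi φ μ σ k) x‖ ≤ Cφ * ((σ:ℝ)*μ)^p := by
  classical
  obtain ⟨r₀, hr₀⟩ := hφc.isBounded.subset_closedBall 0
  set r : ℝ := max r₀ 0 with hrdef
  have hr : 0 ≤ r := le_max_right _ _
  have hsupp : tsupport φ ⊆ Metric.closedBall 0 r :=
    hr₀.trans (Metric.closedBall_subset_closedBall (le_max_left _ _))
  have hbound : ∀ i : ℕ, ∃ A : ℝ, 0 ≤ A ∧ ∀ z, ‖iteratedFDeriv ℝ i φ z‖ ≤ A := by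
    intro i
    obtain ⟨A, hA⟩ := (hφc.iteratedFDeriv i).exists_bound_of_continuous
      (hφs.continuous_iteratedFDeriv (by exact_mod_cast le_top))
    exact ⟨max A 0, le_max_right _ _, fun z => (hA z).trans (le_max_left _ _)⟩
  choose B hB0 hB using hbound
  set A : ℝ := ∑ i ∈ Finset.range (p+1), B i with hAdef
  have hA0 : 0 ≤ A := Finset.sum_nonneg fun i _ => hB0 i
  have hA : ∀ i ≤ p, ∀ z, ‖iteratedFDeriv ℝ i φ z‖ ≤ A := by
    intro i hip z
    refine (hB i z).trans ?_
    exact Finset.single_le_sum (fun j _ => hB0 j) (Finset.mem_range.2 (Nat.lt_succ_of_le hip))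
  set Pf : ℝ → (Fin n → ℝ) → ℝ :=
    fun μ y => ∑' m : Fin n → ℤ, φ (fun j => y j - μ * (m j : ℝ)) with hPfdef
  have key : ∀ (μ : ℝ), 1 ≤ μ → ContDiff ℝ (⊤:ℕ∞) (Pf μ) ∧
      ∀ i ≤ p, ∀ y, ‖iteratedFDeriv ℝ i (Pf μ) y‖ ≤ (2*r+3)^n * A := by
    intro μ hμ
    have hμ0 : (0:ℝ) < μ := lt_of_lt_of_le one_pos hμ
    have hterm_eq : ∀ m : Fin n → ℤ, (fun y : Fin n → ℝ => φ (fun j => y j - μ * (m j : ℝ)))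
        = (fun y : Fin n → ℝ => φ (y + fun j => -(μ * (m j : ℝ)))) := by
      intro m
      funext y
      have harg : (fun j : Fin n => y j - μ * (m j : ℝ))
          = (y + fun j => -(μ * (m j : ℝ))) := by
        funext j
        simp [sub_eq_add_neg]
      rw [harg]
    have hterm_smooth : ∀ m : Fin n → ℤ,
        ContDiff ℝ (⊤:ℕ∞) (fun y : Fin n → ℝ => φ (fun j => y j - μ * (m j : ℝ))) := by
      intro m; rw [hterm_eq m]
      exact hφs.comp (contDiff_id.add contDiff_const)
    have hloc : ∀ y₀ : Fin n → ℝ, ∃ Fs : Finset (Fin n → ℤ),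
        ((Fs.card : ℝ) ≤ (2*r+3)^n) ∧
        ∀ y ∈ Metric.ball y₀ 1, Pf μ y = ∑ m ∈ Fs, φ (fun j => y j - μ * (m j : ℝ)) := by
      intro y₀
      set lo : Fin n → ℤ := fun j => ⌈(y₀ j - r - 1)/μ⌉ with hlodef
      set hi : Fin n → ℤ := fun j => ⌊(y₀ j + r + 1)/μ⌋ with hhidef
      refine ⟨Finset.Icc lo hi, ?_, ?_⟩
      · rw [Pi.card_Icc, Nat.cast_prod]
        have hcoord : ∀ j : Fin n, ((Finset.Icc (lo j) (hi j)).card : ℝ) ≤ 2*r+3 := by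
          intro j
          rw [Int.card_Icc]
          apply my_toNat_cast_le (by linarith)
          push_cast
          have h1 : ((hi j : ℝ)) ≤ (y₀ j + r + 1)/μ := Int.floor_le _
          have h2 : (y₀ j - r - 1)/μ ≤ ((lo j : ℝ)) := Int.le_ceil _
          have h3 : (y₀ j + r + 1)/μ - (y₀ j - r - 1)/μ = (2*r+2)/μ := by
            field_simp; ring
          have h4 : (2*r+2)/μ ≤ 2*r+2 := by
            apply div_le_self (by linarith) hμ
          linarith
        calc (∏ j : Fin n, ((Finset.Icc (lo j) (hi j)).card : ℝ))
            ≤ ∏ _j : Fin n, (2*r+3) :=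
              Finset.prod_le_prod (fun j _ => by positivity) (fun j _ => hcoord j)
          _ = (2*r+3)^n := by simp
      · intro y hy
        apply tsum_eq_sum
        intro m hm
        by_contra hne
        apply hm
        have harg : (fun j => y j - μ * (m j : ℝ)) ∈ Metric.closedBall (0 : Fin n → ℝ) r :=
          hsupp (subset_closure (Function.mem_support.2 hne))
        rw [Metric.mem_closedBall, dist_zero_right] at harg
        have hcoord : ∀ j, |y j - μ * (m j : ℝ)| ≤ r := by
          intro j
          have := norm_le_pi_norm (fun j => y j - μ * (m j : ℝ)) j
          simpa using this.trans harg
        have hclose : ∀ j, |y j - y₀ j| < 1 := by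
          intro j
          have h1 : dist (y j) (y₀ j) ≤ dist y y₀ := dist_le_pi_dist y y₀ j
          rw [Metric.mem_ball] at hy
          calc |y j - y₀ j| = dist (y j) (y₀ j) := (Real.dist_eq _ _).symm
            _ ≤ dist y y₀ := h1
            _ < 1 := hy
        rw [Finset.mem_Icc]
        constructor
        · intro j
          have h1 := abs_le.1 (hcoord j)
          have h2 := abs_le.1 (hclose j).le
          rw [hlodef]
          apply Int.ceil_le.2
          rw [div_le_iff₀ hμ0]
          have hc : (m j : ℝ) * μ = μ * (m j : ℝ) := mul_comm _ _
          linarith [h1.1, h1.2, h2.1, h2.2]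
        · intro j
          have h1 := abs_le.1 (hcoord j)
          have h2 := abs_le.1 (hclose j).le
          rw [hhidef]
          apply Int.le_floor.2
          rw [le_div_iff₀ hμ0]
          have hc : (m j : ℝ) * μ = μ * (m j : ℝ) := mul_comm _ _
          linarith [h1.1, h1.2, h2.1, h2.2]
    constructor
    · rw [contDiff_iff_contDiffAt]
      intro y₀
      obtain ⟨Fs, _, hFs⟩ := hloc y₀
      have hsum : ContDiff ℝ (⊤:ℕ∞)
          (fun y : Fin n → ℝ => ∑ m ∈ Fs, φ (fun j => y j - μ * (m j : ℝ))) :=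
        ContDiff.sum fun m _ => hterm_smooth m
      exact hsum.contDiffAt.congr_of_eventuallyEq
        (Filter.eventuallyEq_of_mem (Metric.ball_mem_nhds y₀ one_pos) hFs)
    · intro i hip y₀
      obtain ⟨Fs, hcard, hFs⟩ := hloc y₀
      have hever : Pf μ =ᶠ[nhds y₀]
          (fun y : Fin n → ℝ => ∑ m ∈ Fs, φ (fun j => y j - μ * (m j : ℝ))) :=
        Filter.eventuallyEq_of_mem (Metric.ball_mem_nhds y₀ one_pos) hFs
      rw [my_iteratedFDeriv_congr_nhds hever i]
      have hsum := iteratedFDeriv_sum (𝕜 := ℝ) (u := Fs)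
        (f := fun m (y : Fin n → ℝ) => φ (fun j => y j - μ * (m j : ℝ)))
        (i := i) (fun m _ => (hterm_smooth m).of_le (by exact_mod_cast le_top))
      rw [congrFun hsum y₀]
      rw [Finset.sum_apply]
      calc ‖∑ m ∈ Fs, iteratedFDeriv ℝ i (fun y : Fin n → ℝ =>
              φ (fun j => y j - μ * (m j : ℝ))) y₀‖
          ≤ ∑ m ∈ Fs, ‖iteratedFDeriv ℝ i (fun y : Fin n → ℝ =>
              φ (fun j => y j - μ * (m j : ℝ))) y₀‖ := norm_sum_le _ _
        _ ≤ ∑ _m ∈ Fs, A := by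
            apply Finset.sum_le_sum
            intro m _
            rw [hterm_eq m]
            rw [congrFun (my_iteratedFDeriv_comp_add φ (fun j => -(μ * (m j : ℝ))) i) y₀]
            exact hA i hip _
        _ = (Fs.card : ℝ) * A := by rw [Finset.sum_const, nsmul_eq_mul]
        _ ≤ (2*r+3)^n * A := mul_le_mul_of_nonneg_right hcard hA0
  refine ⟨(2*r+3)^n * A, by positivity, ?_⟩
  intro μ hμ σ hσ k
  have hμ0 : (0:ℝ) < μ := lt_of_lt_of_le one_pos hμ
  have hσ0 : (0:ℝ) < σ := by exact_mod_cast hσ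
  have hτ : (1:ℝ) ≤ (σ:ℝ)*μ := one_le_mul_of_one_le_of_one_le (by exact_mod_cast hσ) hμ
  set L : (Fin (n+1) → ℝ) →L[ℝ] (Fin n → ℝ) :=
    ContinuousLinearMap.pi (fun j => ((σ:ℝ)*μ) • ContinuousLinearMap.proj (k.succAbove j))
    with hLdef
  have hLapp : ∀ x j, L x j = (σ:ℝ)*μ*x (k.succAbove j) := by
    intro x j; simp [hLdef]
  have hLnorm : ‖L‖ ≤ (σ:ℝ)*μ := by
    apply ContinuousLinearMap.opNorm_le_bound _ (by positivity)
    intro x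
    rw [pi_norm_le_iff_of_nonneg (by positivity)]
    intro j
    rw [hLapp]
    calc ‖(σ:ℝ)*μ*x (k.succAbove j)‖ = (σ:ℝ)*μ*‖x (k.succAbove j)‖ := by
          rw [norm_mul, Real.norm_eq_abs ((σ:ℝ)*μ), abs_of_nonneg (by positivity)]
      _ ≤ (σ:ℝ)*μ*‖x‖ := by
          apply mul_le_mul_of_nonneg_left (norm_le_pi_norm x _) (by positivity)
  have hMik : MikPhi φ μ σ k = (Pf μ) ∘ L := by
    funext x
    simp only [Function.comp_apply]
    unfold MikPhi
    apply tsum_congr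
    intro m
    congr 1
    funext j
    rw [hLapp]
    ring
  obtain ⟨hPfs, hPfb⟩ := key μ hμ
  constructor
  · rw [hMik]
    exact hPfs.comp L.contDiff
  · intro i hip x
    rw [hMik, ContinuousLinearMap.iteratedFDeriv_comp_right L hPfs x (by exact_mod_cast le_top)]
    refine (ContinuousMultilinearMap.norm_compContinuousLinearMap_le _ _).trans ?_
    have h1 : ‖iteratedFDeriv ℝ i (Pf μ) (L x)‖ ≤ (2*r+3)^n * A := hPfb i hip (L x)
    have h2 : (∏ _j : Fin i, ‖L‖) ≤ ((σ:ℝ)*μ)^i := by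
      calc (∏ _j : Fin i, ‖L‖) ≤ ∏ _j : Fin i, ((σ:ℝ)*μ) :=
            Finset.prod_le_prod (fun _ _ => norm_nonneg _) (fun _ _ => hLnorm)
        _ = ((σ:ℝ)*μ)^i := by simp
    have h3 : ((σ:ℝ)*μ)^i ≤ ((σ:ℝ)*μ)^p := pow_le_pow_right₀ hτ hip
    calc ‖iteratedFDeriv ℝ i (Pf μ) (L x)‖ * ∏ _j : Fin i, ‖L‖
        ≤ ((2*r+3)^n * A) * ((σ:ℝ)*μ)^i := by
          apply mul_le_mul h1 h2 (Finset.prod_nonneg fun _ _ => norm_nonneg _) (by positivity)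
      _ ≤ ((2*r+3)^n * A) * ((σ:ℝ)*μ)^p := by
          apply mul_le_mul_of_nonneg_left h3 (by positivity)

theorem time_bound (G : ℝ → ℝ) (hGc : HasCompactSupport G) (hGcont : Continuous G)
    (hGsupp : tsupport G ⊆ Set.Ioo (0:ℝ) 1) :
    ∃ MG : ℝ, 0 ≤ MG ∧ ∀ (d : ℕ) (k : Fin d) (κ : ℝ), 2 ≤ κ → ∀ σ : ℕ, 1 ≤ σ → ∀ α : ℝ,
      ∃ Bk : Set ℝ, MeasurableSet Bk ∧
        volume (Bk ∩ Set.Ioo (0:ℝ) 1) ≤ ENNReal.ofReal (4/κ) ∧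
        ∀ t, |gTildeK G κ α σ k t| ≤ κ^α * MG * Bk.indicator (fun _ => (1:ℝ)) t := by
  classical
  obtain ⟨M₀, hM₀⟩ := hGc.exists_bound_of_continuous hGcont
  set MG : ℝ := max M₀ 0 with hMGdef
  have hMG0 : 0 ≤ MG := le_max_right _ _
  have hMG : ∀ s, |G s| ≤ MG := by
    intro s
    exact (le_trans (le_of_eq (Real.norm_eq_abs _).symm) (hM₀ s)).trans (le_max_left _ _)
  refine ⟨MG, hMG0, ?_⟩
  intro d k κ hκ σ hσ α
  have hκ0 : (0:ℝ) < κ := lt_of_lt_of_le two_pos hκ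
  have hκ1 : (1:ℝ) ≤ κ := le_trans one_le_two hκ
  have hσ0 : (0:ℝ) < σ := by exact_mod_cast hσ
  have hd0 : 0 < d := k.pos
  set s₀ : ℝ := (k.val : ℝ) / (d : ℝ) with hs₀def
  have hs₀0 : 0 ≤ s₀ := by positivity
  have hs₀1 : s₀ < 1 := by
    rw [hs₀def, div_lt_one (by exact_mod_cast hd0)]
    exact_mod_cast k.isLt
  set A : Set ℝ := ⋃ m : ℤ, Set.Icc (s₀ + m) (s₀ + m + 1/κ) with hAdef
  have hterm : ∀ s : ℝ, ∀ m : ℤ, G (κ * (s - s₀ - m)) ≠ 0 →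
      0 < s - s₀ - m ∧ s - s₀ - m < 1/κ := by
    intro s m hne
    have h1 : κ * (s - s₀ - m) ∈ Set.Ioo (0:ℝ) 1 :=
      hGsupp (subset_closure (Function.mem_support.2 hne))
    constructor
    · nlinarith [h1.1]
    · rw [lt_div_iff₀ hκ0]; nlinarith [h1.2]
  have hper : ∀ s : ℝ, |perKShift G κ d k s| ≤ MG * A.indicator (fun _ => (1:ℝ)) s := by
    intro s
    by_cases hex : ∃ m : ℤ, G (κ * (s - s₀ - m)) ≠ 0
    · obtain ⟨m₀, hm₀⟩ := hex
      have huniq : ∀ m : ℤ, m ∉ ({m₀} : Finset ℤ) → G (κ * (s - s₀ - m)) = 0 := by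
        intro m hm
        by_contra hne
        apply hm
        have h1 := hterm s m hne
        have h2 := hterm s m₀ hm₀
        have hκinv : 1/κ ≤ 1 := by rw [div_le_one hκ0]; linarith
        have hmm : m = m₀ := by
          have hlt : |(m : ℝ) - m₀| < 1 := by
            rw [abs_lt]; constructor <;> nlinarith [h1.1, h1.2, h2.1, h2.2]
          have hcast : ((m - m₀ : ℤ) : ℝ) = (m:ℝ) - m₀ := by push_cast; ring
          have habs : |((m - m₀ : ℤ) : ℝ)| < 1 := by rw [hcast]; exact hlt
          have hz : m - m₀ = 0 := by
            by_contra h0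
            have : (1:ℝ) ≤ |((m - m₀ : ℤ) : ℝ)| := by
              rw [← Int.cast_abs]
              exact_mod_cast Int.one_le_abs h0
            linarith
          omega
        simp [hmm]
      have hsum : perKShift G κ d k s = G (κ * (s - s₀ - m₀)) := by
        rw [perKShift, tsum_eq_sum huniq, Finset.sum_singleton]
      have hmem : s ∈ A := by
        rw [hAdef]
        refine Set.mem_iUnion.2 ⟨m₀, ?_⟩
        have h2 := hterm s m₀ hm₀
        constructor <;> [linarith [h2.1]; linarith [h2.2]]
      rw [hsum, Set.indicator_of_mem hmem]
      simpa using hMG _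
    · push_neg at hex
      have hsum : perKShift G κ d k s = 0 := by
        rw [perKShift]
        convert tsum_zero with m
        exact hex m
      rw [hsum, abs_zero]
      have : (0:ℝ) ≤ A.indicator (fun _ => (1:ℝ)) s :=
        Set.indicator_nonneg (fun _ _ => zero_le_one) s
      positivity
  refine ⟨(fun t => (σ:ℝ) * t) ⁻¹' A, ?_, ?_, ?_⟩
  · apply MeasurableSet.preimage
    · exact MeasurableSet.iUnion fun m => measurableSet_Icc
    · exact measurable_const_mul _
  · have hsub : (fun t => (σ:ℝ) * t) ⁻¹' A ∩ Set.Ioo 0 1 ⊆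
        ⋃ m ∈ Finset.Icc (-2 : ℤ) (σ : ℤ),
          Set.Icc ((s₀ + m)/σ) ((s₀ + m + 1/κ)/σ) := by
      rintro t ⟨htA, ht0, ht1⟩
      obtain ⟨m, hm⟩ := Set.mem_iUnion.1 htA
      have hm1 : s₀ + m ≤ (σ:ℝ)*t := hm.1
      have hm2 : (σ:ℝ)*t ≤ s₀ + m + 1/κ := hm.2
      have hκinv : 1/κ ≤ 1 := by rw [div_le_one hκ0]; linarith
      have hσt1 : (σ:ℝ)*t < σ := by nlinarith
      have hσt0 : 0 < (σ:ℝ)*t := by positivity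
      have hmmem : m ∈ Finset.Icc (-2 : ℤ) (σ : ℤ) := by
        rw [Finset.mem_Icc]
        constructor
        · have : (-2:ℝ) < m := by nlinarith
          exact_mod_cast this.le
        · have : (m:ℝ) ≤ σ := by nlinarith
          exact_mod_cast this
      have htmem : t ∈ Set.Icc ((s₀ + m)/σ) ((s₀ + m + 1/κ)/σ) := by
        constructor
        · rw [div_le_iff₀ hσ0]; linarith
        · rw [le_div_iff₀ hσ0]; linarith
      exact Set.mem_biUnion hmmem htmem
    refine (measure_mono hsub).trans ?_
    refine (measure_biUnion_finset_le _ _).trans ?_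
    have hval : ∀ m : ℤ, volume (Set.Icc ((s₀ + m)/σ) ((s₀ + m + 1/κ)/σ))
        = ENNReal.ofReal (1/(σ*κ)) := by
      intro m
      rw [Real.volume_Icc]
      congr 1
      field_simp
      ring
    calc ∑ m ∈ Finset.Icc (-2 : ℤ) (σ : ℤ),
          volume (Set.Icc ((s₀ + m)/σ) ((s₀ + m + 1/κ)/σ))
        = ∑ _m ∈ Finset.Icc (-2 : ℤ) (σ : ℤ), ENNReal.ofReal (1/(σ*κ)) := by
          exact Finset.sum_congr rfl fun m _ => hval m
      _ = ((σ + 3 : ℕ) : ℝ≥0∞) * ENNReal.ofReal (1/(σ*κ)) := by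
          rw [Finset.sum_const, Int.card_Icc]
          have hc : ((σ:ℤ) + 1 - (-2)).toNat = σ + 3 := by omega
          rw [hc, nsmul_eq_mul]
      _ ≤ ENNReal.ofReal (4/κ) := by
          rw [← ENNReal.ofReal_natCast, ← ENNReal.ofReal_mul (by positivity)]
          apply ENNReal.ofReal_le_ofReal
          rw [mul_one_div, div_le_div_iff₀ (by positivity) hκ0]
          push_cast
          nlinarith [hκ0, (show (1:ℝ) ≤ σ by exact_mod_cast hσ)]
  · intro t
    rw [gTildeK, abs_mul, abs_of_nonneg (Real.rpow_nonneg hκ0.le α)]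
    rw [mul_assoc]
    apply mul_le_mul_of_nonneg_left _ (Real.rpow_nonneg hκ0.le α)
    refine (hper ((σ:ℝ)*t)).trans ?_
    by_cases ht : (σ:ℝ)*t ∈ A
    · rw [Set.indicator_of_mem ht, Set.indicator_of_mem (by exact ht)]
    · rw [Set.indicator_of_notMem ht, Set.indicator_of_notMem (by exact ht)]

end

end DPEHelpers

/-- the `L^p_t C^p` estimate on the principal density perturbation
`θ_p(t,x) = -∑_k g̃_k(t) R_k(t,x) 𝚽_k(x)` (Lemma 4.2 of the paper). Here `d = n+1`. -/
theorem density_perturbation_estimate (n : ℕ) (hn : 1 ≤ n)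
    (G : ℝ → ℝ) (hGs : ContDiff ℝ (⊤ : ℕ∞) G)
    (hGc : HasCompactSupport G) (hGsupp : tsupport G ⊆ Set.Ioo (0:ℝ) 1)
    (hGnorm : (∫ t : ℝ, (G t)^2) = 1)
    (φ : (Fin n → ℝ) → ℝ) (Ω : (Fin n → ℝ) → (Fin n → ℝ))
    (hφs : ContDiff ℝ (⊤ : ℕ∞) φ) (hφc : HasCompactSupport φ)
    (hΩs : ContDiff ℝ (⊤ : ℕ∞) Ω) (hΩc : HasCompactSupport Ω)
    (hΩsupp : tsupport Ω ⊆ Set.univ.pi fun _ => Set.Ioo (0:ℝ) 1)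
    (hdiv : ∀ y, divF Ω y = φ y)
    (hφnorm : (∫ y, (φ y)^2) = 1)
    (p : ℕ) (hp : 1 ≤ p) :
    ∃ C : ℝ, 0 < C ∧
      ∀ μ : ℝ, 1 ≤ μ → ∀ σ : ℕ, 1 ≤ σ → ∀ κ : ℝ, ((n : ℝ) + 1) ≤ κ →
      ∀ α : ℝ, 0 < α → α < 1 →
      ∀ R : ℝ → (Fin (n+1) → ℝ) → (Fin (n+1) → ℝ), SmoothPer (n+1) R →
        (∫ t in Set.Ioo (0:ℝ) 1,
            (ckNorm p (fun x => -(∑ k, gTildeK G κ α σ k t * R t x k * MikPhi φ μ σ k x)))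
              ^ (p:ℝ)) ^ (1/(p:ℝ))
          ≤ C * (⨆ k : Fin (n+1), ⨆ t : Set.Icc (0:ℝ) 1, ckNorm p (fun x => R t x k))
              * ((σ : ℝ) * μ) ^ p * κ ^ (α - 1/(p:ℝ)) := by
  classical
  obtain ⟨Cφ, hCφ0, hCφ⟩ := mikPhi_props φ hφs hφc p
  obtain ⟨MG, hMG0, hTB⟩ := time_bound G hGc hGs.continuous hGsupp
  refine ⟨((p:ℝ)+1) * 2^p * ((n:ℝ)+1) * MG * Cφ * (4*((n:ℝ)+1)) + 1, by positivity, ?_⟩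
  intro μ hμ σ hσ κ hκ α hα0 hα1 R hR
  set C₀ : ℝ := ((p:ℝ)+1) * 2^p * ((n:ℝ)+1) * MG * Cφ * (4*((n:ℝ)+1)) with hC₀def
  have hp1 : (1:ℝ) ≤ (p:ℝ) := by exact_mod_cast hp
  have hppos : (0:ℝ) < (p:ℝ) := by linarith
  have hκ2 : (2:ℝ) ≤ κ := le_trans (by exact_mod_cast Nat.succ_le_succ hn) hκ
  have hκ0 : (0:ℝ) < κ := by linarith
  have hμ0 : (0:ℝ) < μ := by linarith
  have hσ1 : (1:ℝ) ≤ (σ:ℝ) := by exact_mod_cast hσ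
  set MR : ℝ := ⨆ k : Fin (n+1), ⨆ t : Set.Icc (0:ℝ) 1, ckNorm p (fun x => R t x k) with hMRdef
  have hMR0 : 0 ≤ MR :=
    Real.iSup_nonneg fun k => Real.iSup_nonneg fun t => my_ckNorm_nonneg _ _
  have hMRb : ∀ t ∈ Set.Icc (0:ℝ) 1, ∀ k : Fin (n+1),
      ckNorm p (fun x => R t x k) ≤ MR := by
    intro t ht k
    have h1 : ckNorm p (fun x => R t x k)
        ≤ ⨆ t' : Set.Icc (0:ℝ) 1, ckNorm p (fun x => R (t':ℝ) x k) :=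
      le_ciSup (my_R_bddAbove R hR k p) ⟨t, ht⟩
    refine h1.trans (le_ciSup (f := fun k : Fin (n+1) =>
      ⨆ t' : Set.Icc (0:ℝ) 1, ckNorm p (fun x => R (t':ℝ) x k)) ?_ k)
    exact (Set.finite_range _).bddAbove
  have hRd : ∀ t ∈ Set.Icc (0:ℝ) 1, ∀ k : Fin (n+1), ∀ i ≤ p, ∀ x,
      ‖iteratedFDeriv ℝ i (fun y => R t y k) x‖ ≤ MR := by
    intro t ht k i hip x
    exact (my_norm_iFD_le_ckNorm _ (my_slice_facts R hR k t).1
      (my_slice_facts R hR k t).2 hip x).trans (hMRb t ht k)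
  have hMik := fun k : Fin (n+1) => hCφ μ hμ σ hσ k
  set CK : ℝ := Cφ * ((σ:ℝ)*μ)^p with hCKdef
  have hCK0 : 0 ≤ CK := by positivity
  choose Bk hBkm hBkvol hBkb using fun k : Fin (n+1) => hTB (n+1) k κ hκ2 σ hσ α
  set B : Set ℝ := ⋃ k : Fin (n+1), Bk k with hBdef
  have hBm : MeasurableSet B := MeasurableSet.iUnion hBkm
  have hκα0 : (0:ℝ) ≤ κ^α := Real.rpow_nonneg hκ0.le α
  have hind : ∀ t, (∑ k : Fin (n+1), |gTildeK G κ α σ k t|)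
      ≤ κ^α * MG * (((n:ℝ)+1) * B.indicator (fun _ => (1:ℝ)) t) := by
    intro t
    have h1 : ∀ k : Fin (n+1),
        |gTildeK G κ α σ k t| ≤ κ^α * MG * B.indicator (fun _ => (1:ℝ)) t := by
      intro k
      refine (hBkb k t).trans ?_
      apply mul_le_mul_of_nonneg_left _ (by positivity)
      by_cases hk : t ∈ Bk k
      · rw [Set.indicator_of_mem hk, Set.indicator_of_mem (Set.mem_iUnion.2 ⟨k, hk⟩)]
      · rw [Set.indicator_of_notMem hk]
        exact Set.indicator_nonneg (fun _ _ => zero_le_one) t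
    calc (∑ k : Fin (n+1), |gTildeK G κ α σ k t|)
        ≤ ∑ _k : Fin (n+1), κ^α * MG * B.indicator (fun _ => (1:ℝ)) t :=
          Finset.sum_le_sum (fun k _ => h1 k)
      _ = ((n:ℝ)+1) * (κ^α * MG * B.indicator (fun _ => (1:ℝ)) t) := by
          rw [Finset.sum_const, Finset.card_univ, Fintype.card_fin, nsmul_eq_mul]
          push_cast
          ring
      _ = κ^α * MG * (((n:ℝ)+1) * B.indicator (fun _ => (1:ℝ)) t) := by ring
  set E : ℝ := ((p:ℝ)+1) * (κ^α * MG * ((n:ℝ)+1) * (2^p * MR * CK)) with hEdef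
  have hE0 : 0 ≤ E := by positivity
  have hpt : ∀ t ∈ Set.Ioo (0:ℝ) 1,
      ckNorm p (fun x => -(∑ k, gTildeK G κ α σ k t * R t x k * MikPhi φ μ σ k x))
        ≤ E * B.indicator (fun _ => (1:ℝ)) t := by
    intro t ht
    have htIcc : t ∈ Set.Icc (0:ℝ) 1 := ⟨ht.1.le, ht.2.le⟩
    have hprod : ∀ (i : ℕ), i ≤ p → ∀ (k : Fin (n+1)) (x : Fin (n+1) → ℝ),
        ‖iteratedFDeriv ℝ i (fun y => R t y k * MikPhi φ μ σ k y) x‖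
          ≤ 2^p * (MR * CK) := by
      intro i hip k x
      refine (norm_iteratedFDeriv_mul_le (𝕜 := ℝ)
        (my_slice_facts R hR k t).1 (hMik k).1 x (by exact_mod_cast le_top)).trans ?_
      have hstep : ∀ j ∈ Finset.range (i+1),
          (i.choose j : ℝ) * ‖iteratedFDeriv ℝ j (fun y => R t y k) x‖ *
            ‖iteratedFDeriv ℝ (i-j) (MikPhi φ μ σ k) x‖
          ≤ (i.choose j : ℝ) * (MR * CK) := by
        intro j hj
        have hj' : j ≤ p := le_trans (Nat.lt_succ_iff.1 (Finset.mem_range.1 hj)) hip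
        have h1 := hRd t htIcc k j hj' x
        have h2 := (hMik k).2 (i-j) (le_trans (Nat.sub_le i j) hip) x
        have c0 : (0:ℝ) ≤ (i.choose j : ℝ) := Nat.cast_nonneg _
        calc (i.choose j : ℝ) * ‖iteratedFDeriv ℝ j (fun y => R t y k) x‖ *
              ‖iteratedFDeriv ℝ (i-j) (MikPhi φ μ σ k) x‖
            ≤ (i.choose j : ℝ) * MR * ‖iteratedFDeriv ℝ (i-j) (MikPhi φ μ σ k) x‖ := by
              apply mul_le_mul_of_nonneg_right _ (norm_nonneg _)
              exact mul_le_mul_of_nonneg_left h1 c0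
          _ ≤ (i.choose j : ℝ) * MR * CK := mul_le_mul_of_nonneg_left h2 (by positivity)
          _ = (i.choose j : ℝ) * (MR * CK) := by ring
      refine (Finset.sum_le_sum hstep).trans ?_
      have hch : (∑ j ∈ Finset.range (i+1), (i.choose j : ℝ)) = (2:ℝ)^i := by
        rw [← Nat.cast_sum]
        rw [Nat.sum_range_choose]
        push_cast
        ring
      rw [← Finset.sum_mul, hch]
      have h2i : (2:ℝ)^i ≤ 2^p := pow_le_pow_right₀ one_le_two hip
      apply mul_le_mul_of_nonneg_right h2i (by positivity)
    have hbd : ∀ i ≤ p, ∀ x, ‖iteratedFDeriv ℝ i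
        (fun x => -(∑ k, gTildeK G κ α σ k t * R t x k * MikPhi φ μ σ k x)) x‖
        ≤ (∑ k : Fin (n+1), |gTildeK G κ α σ k t|) * (2^p * (MR * CK)) := by
      intro i hip x
      have hhs : ∀ k : Fin (n+1),
          ContDiff ℝ (⊤:ℕ∞) (fun y => R t y k * MikPhi φ μ σ k y) :=
        fun k => ((my_slice_facts R hR k t).1).mul (hMik k).1
      have hfeq : (fun x => -(∑ k, gTildeK G κ α σ k t * R t x k * MikPhi φ μ σ k x))
          = (fun x => -(∑ k : Fin (n+1),
              (gTildeK G κ α σ k t • fun y => R t y k * MikPhi φ μ σ k y) x)) := by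
        funext z
        congr 1
        refine Finset.sum_congr rfl fun k _ => ?_
        simp only [Pi.smul_apply, smul_eq_mul]
        ring
      rw [hfeq]
      have hneg : iteratedFDeriv ℝ i (fun x => -(∑ k : Fin (n+1),
            (gTildeK G κ α σ k t • fun y => R t y k * MikPhi φ μ σ k y) x)) x
          = -(iteratedFDeriv ℝ i (fun x => ∑ k : Fin (n+1),
            (gTildeK G κ α σ k t • fun y => R t y k * MikPhi φ μ σ k y) x) x) :=
        iteratedFDeriv_neg_apply
      rw [hneg, norm_neg]
      have hsumd : iteratedFDeriv ℝ i (fun x => ∑ k : Fin (n+1),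
            (gTildeK G κ α σ k t • fun y => R t y k * MikPhi φ μ σ k y) x)
          = ∑ k : Fin (n+1), iteratedFDeriv ℝ i
            (gTildeK G κ α σ k t • fun y => R t y k * MikPhi φ μ σ k y) :=
        iteratedFDeriv_sum (fun k _ =>
          ((hhs k).const_smul (gTildeK G κ α σ k t)).of_le (by exact_mod_cast le_top))
      rw [congrFun hsumd x, Finset.sum_apply]
      have hsm : ∀ k : Fin (n+1), iteratedFDeriv ℝ i
            (gTildeK G κ α σ k t • fun y => R t y k * MikPhi φ μ σ k y) x
          = gTildeK G κ α σ k t •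
            iteratedFDeriv ℝ i (fun y => R t y k * MikPhi φ μ σ k y) x :=
        fun k => iteratedFDeriv_const_smul_apply ((hhs k).contDiffAt.of_le (by exact_mod_cast le_top))
      calc ‖∑ k : Fin (n+1), iteratedFDeriv ℝ i
              (gTildeK G κ α σ k t • fun y => R t y k * MikPhi φ μ σ k y) x‖
          ≤ ∑ k : Fin (n+1), ‖iteratedFDeriv ℝ i
              (gTildeK G κ α σ k t • fun y => R t y k * MikPhi φ μ σ k y) x‖ :=
            norm_sum_le _ _
        _ ≤ ∑ k : Fin (n+1), |gTildeK G κ α σ k t| * (2^p * (MR * CK)) := by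
            apply Finset.sum_le_sum
            intro k _
            rw [hsm k, norm_smul (gTildeK G κ α σ k t)
              (iteratedFDeriv ℝ i (fun y => R t y k * MikPhi φ μ σ k y) x),
              Real.norm_eq_abs]
            exact mul_le_mul_of_nonneg_left (hprod i hip k x) (abs_nonneg _)
        _ = (∑ k : Fin (n+1), |gTildeK G κ α σ k t|) * (2^p * (MR * CK)) := by
            rw [Finset.sum_mul]
    refine (my_ckNorm_le_of_bound p _ _ hbd).trans ?_
    calc ((p:ℝ)+1) * ((∑ k : Fin (n+1), |gTildeK G κ α σ k t|) * (2^p * (MR * CK)))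
        ≤ ((p:ℝ)+1) * ((κ^α * MG * (((n:ℝ)+1) * B.indicator (fun _ => (1:ℝ)) t))
            * (2^p * (MR * CK))) := by
          apply mul_le_mul_of_nonneg_left _ (by positivity)
          apply mul_le_mul_of_nonneg_right (hind t) (by positivity)
      _ = E * B.indicator (fun _ => (1:ℝ)) t := by rw [hEdef]; ring
  -- the integral estimate
  have hint_le : (∫ t in Set.Ioo (0:ℝ) 1, (ckNorm p (fun x =>
      -(∑ k, gTildeK G κ α σ k t * R t x k * MikPhi φ μ σ k x)))^(p:ℝ))
      ≤ E^p * (((n:ℝ)+1) * (4/κ)) := by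
    have hg_int : Integrable (B.indicator (fun _ => E^p))
        (volume.restrict (Set.Ioo (0:ℝ) 1)) := by
      apply Integrable.indicator _ hBm
      exact (integrableOn_const measure_Ioo_lt_top.ne :
        IntegrableOn (fun _ => E^p) (Set.Ioo (0:ℝ) 1) volume)
    have hle : ∀ᵐ t ∂(volume.restrict (Set.Ioo (0:ℝ) 1)),
        (ckNorm p (fun x => -(∑ k, gTildeK G κ α σ k t * R t x k * MikPhi φ μ σ k x)))^(p:ℝ)
          ≤ B.indicator (fun _ => E^p) t := by
      filter_upwards [ae_restrict_mem measurableSet_Ioo] with t ht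
      have h1 := hpt t ht
      rw [Real.rpow_natCast]
      by_cases hB : t ∈ B
      · rw [Set.indicator_of_mem hB]
        rw [Set.indicator_of_mem hB, mul_one] at h1
        exact pow_le_pow_left₀ (my_ckNorm_nonneg _ _) h1 p
      · rw [Set.indicator_of_notMem hB]
        rw [Set.indicator_of_notMem hB, mul_zero] at h1
        have h2 : ckNorm p (fun x =>
            -(∑ k, gTildeK G κ α σ k t * R t x k * MikPhi φ μ σ k x)) = 0 :=
          le_antisymm h1 (my_ckNorm_nonneg _ _)
        rw [h2, zero_pow (by omega)]
    have h0 : ∀ᵐ t ∂(volume.restrict (Set.Ioo (0:ℝ) 1)), 0 ≤ (ckNorm p (fun x =>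
        -(∑ k, gTildeK G κ α σ k t * R t x k * MikPhi φ μ σ k x)))^(p:ℝ) :=
      Filter.Eventually.of_forall fun t => Real.rpow_nonneg (my_ckNorm_nonneg _ _) _
    refine (integral_mono_of_nonneg h0 hg_int hle).trans ?_
    rw [integral_indicator hBm, Measure.restrict_restrict hBm, setIntegral_const,
      smul_eq_mul, mul_comm]
    apply mul_le_mul_of_nonneg_left _ (by positivity)
    apply ENNReal.toReal_le_of_le_ofReal (by positivity)
    have hv1 : volume (B ∩ Set.Ioo (0:ℝ) 1)
        ≤ ∑ k : Fin (n+1), volume (Bk k ∩ Set.Ioo (0:ℝ) 1) := by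
      rw [hBdef, Set.iUnion_inter]
      exact measure_iUnion_fintype_le _ _
    refine hv1.trans ?_
    calc ∑ k : Fin (n+1), volume (Bk k ∩ Set.Ioo (0:ℝ) 1)
        ≤ ∑ _k : Fin (n+1), ENNReal.ofReal (4/κ) :=
          Finset.sum_le_sum fun k _ => hBkvol k
      _ = ((n+1 : ℕ) : ℝ≥0∞) * ENNReal.ofReal (4/κ) := by
          rw [Finset.sum_const, Finset.card_univ, Fintype.card_fin, nsmul_eq_mul]
      _ ≤ ENNReal.ofReal (((n:ℝ)+1) * (4/κ)) := by
          rw [← ENNReal.ofReal_natCast, ← ENNReal.ofReal_mul (by positivity)]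
          apply le_of_eq
          congr 1
          push_cast
          ring
  have hLHS0 : 0 ≤ ∫ t in Set.Ioo (0:ℝ) 1, (ckNorm p (fun x =>
      -(∑ k, gTildeK G κ α σ k t * R t x k * MikPhi φ μ σ k x)))^(p:ℝ) :=
    integral_nonneg fun t => Real.rpow_nonneg (my_ckNorm_nonneg _ _) _
  have h4 : (∫ t in Set.Ioo (0:ℝ) 1, (ckNorm p (fun x =>
      -(∑ k, gTildeK G κ α σ k t * R t x k * MikPhi φ μ σ k x)))^(p:ℝ))^(1/(p:ℝ))
      ≤ (E^p * (((n:ℝ)+1) * (4/κ)))^(1/(p:ℝ)) :=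
    Real.rpow_le_rpow hLHS0 hint_le (by positivity)
  refine h4.trans ?_
  have hEp : (E^p * (((n:ℝ)+1) * (4/κ)))^(1/(p:ℝ))
      = E * ((((n:ℝ)+1) * (4/κ)))^(1/(p:ℝ)) := by
    rw [Real.mul_rpow (by positivity) (by positivity), ← Real.rpow_natCast E p,
      ← Real.rpow_mul hE0, mul_one_div, div_self (by positivity : (p:ℝ) ≠ 0),
      Real.rpow_one]
  rw [hEp]
  have hc' : ((((n:ℝ)+1) * (4/κ)))^(1/(p:ℝ)) ≤ (4*((n:ℝ)+1)) * κ^(-(1/(p:ℝ))) := by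
    have h1 : ((n:ℝ)+1) * (4/κ) = (4*((n:ℝ)+1)) / κ := by ring
    rw [h1, Real.div_rpow (by positivity) hκ0.le, Real.rpow_neg hκ0.le, div_eq_mul_inv]
    apply mul_le_mul_of_nonneg_right _ (by positivity)
    calc (4*((n:ℝ)+1))^(1/(p:ℝ)) ≤ (4*((n:ℝ)+1))^(1:ℝ) := by
          apply Real.rpow_le_rpow_of_exponent_le
            (by have := Nat.cast_nonneg (α := ℝ) n; linarith)
          rw [div_le_one hppos]
          exact hp1
      _ = 4*((n:ℝ)+1) := Real.rpow_one _
  have hκsplit : κ^(α - 1/(p:ℝ)) = κ^α * κ^(-(1/(p:ℝ))) := by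
    rw [← Real.rpow_add hκ0]
    ring_nf
  calc E * ((((n:ℝ)+1) * (4/κ)))^(1/(p:ℝ))
      ≤ E * ((4*((n:ℝ)+1)) * κ^(-(1/(p:ℝ)))) := mul_le_mul_of_nonneg_left hc' hE0
    _ = C₀ * MR * ((σ:ℝ)*μ)^p * κ^(α - 1/(p:ℝ)) := by
        rw [hκsplit, hEdef, hC₀def, hCKdef]
        ring
    _ ≤ (C₀ + 1) * MR * ((σ:ℝ)*μ)^p * κ^(α - 1/(p:ℝ)) := by
        have hrp0 : (0:ℝ) ≤ κ^(α - 1/(p:ℝ)) := Real.rpow_nonneg hκ0.le _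
        apply mul_le_mul_of_nonneg_right _ hrp0
        apply mul_le_mul_of_nonneg_right _ (by positivity)
        apply mul_le_mul_of_nonneg_right _ hMR0
        linarith
end
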